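/- arXiv:1102.5183 — 9 statements merged into one kernel-verified Lean document; each statement's English description precedes it below -/
import Mathlib

section
/- For every positive integer q, the bilinear bracket on the free complex vector space with basis {L_{α,i} : α ∈ ℤ, i ∈ ℤ_{≥0}} determined by [L_{α,i}, L_{β,j}] = (β(i+q) − α(j+q)) L_{α+β, i+j} is alternating and satisfies the Jacobi identity, hence endows this space with the structure of a complex Lie algebra B(q). -/
/-!
Bilinearity is immediate from the definition as a double sum, so antisymmetry and the Jacobi
identity only need to be checked on basis vectors. There the Jacobi identity reduces to the
vanishing of `c(p, r) c(p + r, t) + c(r, t) c(r + t, p) + c(t, p) c(t + p, r)` for the integer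
structure constants `c(p, r) = r₁(p₂ + q) − p₁(r₂ + q)`, a polynomial identity. Since the
Jacobiator is invariant under cyclic permutation, linearity in its first argument alone suffices
to pass from basis vectors to arbitrary vectors.
-/

/-- The bilinear bracket on the free complex vector space with basis
`{L_{α,i} : α ∈ ℤ, i ∈ ℤ_{≥0}}` (realized as finitely supported functions `(ℤ × ℕ) →₀ ℂ`,
where `L_{α,i}` is `Finsupp.single (α, i) 1`), determined on basis elements by
`[L_{α,i}, L_{β,j}] = (β(i+q) − α(j+q)) L_{α+β, i+j}`. -/
noncomputable def blockBracket (q : ℕ) (x y : (ℤ × ℕ) →₀ ℂ) : (ℤ × ℕ) →₀ ℂ :=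
  x.sum fun p a => y.sum fun r b =>
    (a * b * (((r.1 * ((p.2 : ℤ) + q) - p.1 * ((r.2 : ℤ) + q)) : ℤ) : ℂ)) •
      Finsupp.single (p.1 + r.1, p.2 + r.2) (1 : ℂ)

open Finsupp

section

variable (q : ℕ)

def blockStructConst (p r : ℤ × ℕ) : ℤ :=
  r.1 * ((p.2 : ℤ) + q) - p.1 * ((r.2 : ℤ) + q)

theorem blockStructConst_jacobi (p r t : ℤ × ℕ) :
    blockStructConst q p r * blockStructConst q (p + r) t +
      blockStructConst q r t * blockStructConst q (r + t) p +
      blockStructConst q t p * blockStructConst q (t + p) r = 0 := by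
  simp only [blockStructConst, Prod.fst_add, Prod.snd_add]
  push_cast
  ring

@[simp]
theorem blockBracket_zero_left (y : (ℤ × ℕ) →₀ ℂ) : blockBracket q 0 y = 0 :=
  sum_zero_index

@[simp]
theorem blockBracket_zero_right (x : (ℤ × ℕ) →₀ ℂ) : blockBracket q x 0 = 0 := by
  simp [blockBracket]

theorem blockBracket_smul_left (a : ℂ) (x y : (ℤ × ℕ) →₀ ℂ) :
    blockBracket q (a • x) y = a • blockBracket q x y := by
  rw [blockBracket, sum_smul_index' (by simp), blockBracket, smul_sum]
  refine sum_congr fun p _ => ?_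
  rw [smul_sum]
  refine sum_congr fun r _ => ?_
  rw [smul_smul, smul_eq_mul, mul_assoc a, mul_assoc a]

theorem blockBracket_smul_right (a : ℂ) (x y : (ℤ × ℕ) →₀ ℂ) :
    blockBracket q x (a • y) = a • blockBracket q x y := by
  rw [blockBracket, blockBracket, smul_sum]
  refine sum_congr fun p _ => ?_
  rw [sum_smul_index' (by simp), smul_sum]
  refine sum_congr fun r _ => ?_
  rw [smul_smul, smul_eq_mul]
  congr 1
  ring

theorem blockBracket_add_left (x₁ x₂ y : (ℤ × ℕ) →₀ ℂ) :
    blockBracket q (x₁ + x₂) y = blockBracket q x₁ y + blockBracket q x₂ y :=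
  sum_add_index' (by simp) fun _ _ _ => by simp only [add_mul, add_smul, sum_add]

theorem blockBracket_add_right (x y₁ y₂ : (ℤ × ℕ) →₀ ℂ) :
    blockBracket q x (y₁ + y₂) = blockBracket q x y₁ + blockBracket q x y₂ := by
  rw [blockBracket, blockBracket, blockBracket, ← sum_add]
  exact sum_congr fun _ _ =>
    sum_add_index' (by simp) fun _ _ _ => by simp only [mul_add, add_mul, add_smul]

theorem blockBracket_single_single (p r : ℤ × ℕ) (a b : ℂ) :
    blockBracket q (single p a) (single r b) =
      (a * b * blockStructConst q p r) • single (p + r) 1 := by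
  rw [blockBracket, sum_single_index (by simp), sum_single_index (by simp)]
  rfl

theorem blockBracket_swap (x y : (ℤ × ℕ) →₀ ℂ) :
    blockBracket q y x = -blockBracket q x y := by
  induction x using Finsupp.induction_linear with
  | zero => simp
  | add f g hf hg =>
    rw [blockBracket_add_right, blockBracket_add_left, hf, hg, neg_add]
  | single p a =>
    induction y using Finsupp.induction_linear with
    | zero => simp
    | add f g hf hg =>
      rw [blockBracket_add_right, blockBracket_add_left, hf, hg, neg_add]
    | single r b =>
      rw [blockBracket_single_single, blockBracket_single_single, ← neg_smul, add_comm r]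
      congr 1
      simp only [blockStructConst]
      push_cast
      ring

theorem blockBracket_self (x : (ℤ × ℕ) →₀ ℂ) : blockBracket q x x = 0 :=
  self_eq_neg.mp (blockBracket_swap q x x)

noncomputable def blockJacobiator (x y z : (ℤ × ℕ) →₀ ℂ) : (ℤ × ℕ) →₀ ℂ :=
  blockBracket q (blockBracket q x y) z + blockBracket q (blockBracket q y z) x +
    blockBracket q (blockBracket q z x) y

theorem blockJacobiator_rotate (x y z : (ℤ × ℕ) →₀ ℂ) :
    blockJacobiator q x y z = blockJacobiator q y z x := by
  simp only [blockJacobiator]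
  abel

theorem blockJacobiator_add_left (x₁ x₂ y z : (ℤ × ℕ) →₀ ℂ) :
    blockJacobiator q (x₁ + x₂) y z = blockJacobiator q x₁ y z + blockJacobiator q x₂ y z := by
  simp only [blockJacobiator, blockBracket_add_left, blockBracket_add_right]
  abel

theorem blockJacobiator_single_single_single (p r t : ℤ × ℕ) (a b d : ℂ) :
    blockJacobiator q (single p a) (single r b) (single t d) = 0 := by
  simp only [blockJacobiator, blockBracket_single_single, blockBracket_smul_left, smul_smul]
  rw [show r + t + p = p + r + t by abel, show t + p + r = p + r + t by abel, ← add_smul,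
    ← add_smul]
  have key := congrArg (Int.cast : ℤ → ℂ) (blockStructConst_jacobi q p r t)
  push_cast at key
  convert zero_smul ℂ _
  linear_combination (a * b * d) * key

theorem blockJacobiator_eq_zero_of_single_left {y z : (ℤ × ℕ) →₀ ℂ}
    (h : ∀ p a, blockJacobiator q (single p a) y z = 0) (x : (ℤ × ℕ) →₀ ℂ) :
    blockJacobiator q x y z = 0 := by
  induction x using Finsupp.induction_linear with
  | zero => simp [blockJacobiator]
  | add f g hf hg => rw [blockJacobiator_add_left, hf, hg, add_zero]
  | single p a => exact h p a

theorem blockJacobiator_eq_zero (x y z : (ℤ × ℕ) →₀ ℂ) : blockJacobiator q x y z = 0 := by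
  refine blockJacobiator_eq_zero_of_single_left q (fun p a => ?_) x
  rw [blockJacobiator_rotate]
  refine blockJacobiator_eq_zero_of_single_left q (fun r b => ?_) y
  rw [blockJacobiator_rotate]
  refine blockJacobiator_eq_zero_of_single_left q (fun t d => ?_) z
  rw [blockJacobiator_rotate]
  exact blockJacobiator_single_single_single q p r t a b d

end

theorem blockBracket_isLieBracket_general (q : ℕ) :
    (∀ (a : ℂ) (x y : (ℤ × ℕ) →₀ ℂ), blockBracket q (a • x) y = a • blockBracket q x y) ∧
    (∀ (a : ℂ) (x y : (ℤ × ℕ) →₀ ℂ), blockBracket q x (a • y) = a • blockBracket q x y) ∧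
    (∀ x₁ x₂ y : (ℤ × ℕ) →₀ ℂ,
      blockBracket q (x₁ + x₂) y = blockBracket q x₁ y + blockBracket q x₂ y) ∧
    (∀ x y₁ y₂ : (ℤ × ℕ) →₀ ℂ,
      blockBracket q x (y₁ + y₂) = blockBracket q x y₁ + blockBracket q x y₂) ∧
    (∀ (α β : ℤ) (i j : ℕ),
      blockBracket q (Finsupp.single (α, i) 1) (Finsupp.single (β, j) 1) =
        (((β * ((i : ℤ) + q) - α * ((j : ℤ) + q)) : ℤ) : ℂ) •
          Finsupp.single (α + β, i + j) (1 : ℂ)) ∧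
    (∀ x : (ℤ × ℕ) →₀ ℂ, blockBracket q x x = 0) ∧
    (∀ x y z : (ℤ × ℕ) →₀ ℂ,
      blockBracket q (blockBracket q x y) z + blockBracket q (blockBracket q y z) x +
        blockBracket q (blockBracket q z x) y = 0) :=
  ⟨blockBracket_smul_left q, blockBracket_smul_right q, blockBracket_add_left q,
    blockBracket_add_right q,
    fun α β i j => by rw [blockBracket_single_single, one_mul, one_mul]; rfl,
    blockBracket_self q, blockJacobiator_eq_zero q⟩

/-- For every positive integer `q`, the bracket `blockBracket q` is bilinear, takes the
prescribed values on basis elements, is alternating, and satisfies the Jacobi identity;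
hence it endows the free complex vector space on `{L_{α,i}}` with the structure of a
complex Lie algebra `B(q)`. -/
theorem blockBracket_isLieBracket (q : ℕ) (hq : 0 < q) :
    (∀ (a : ℂ) (x y : (ℤ × ℕ) →₀ ℂ), blockBracket q (a • x) y = a • blockBracket q x y) ∧
    (∀ (a : ℂ) (x y : (ℤ × ℕ) →₀ ℂ), blockBracket q x (a • y) = a • blockBracket q x y) ∧
    (∀ x₁ x₂ y : (ℤ × ℕ) →₀ ℂ,
      blockBracket q (x₁ + x₂) y = blockBracket q x₁ y + blockBracket q x₂ y) ∧
    (∀ x y₁ y₂ : (ℤ × ℕ) →₀ ℂ,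
      blockBracket q x (y₁ + y₂) = blockBracket q x y₁ + blockBracket q x y₂) ∧
    (∀ (α β : ℤ) (i j : ℕ),
      blockBracket q (Finsupp.single (α, i) 1) (Finsupp.single (β, j) 1) =
        (((β * ((i : ℤ) + q) - α * ((j : ℤ) + q)) : ℤ) : ℂ) •
          Finsupp.single (α + β, i + j) (1 : ℂ)) ∧
    (∀ x : (ℤ × ℕ) →₀ ℂ, blockBracket q x x = 0) ∧
    (∀ x y z : (ℤ × ℕ) →₀ ℂ,
      blockBracket q (blockBracket q x y) z + blockBracket q (blockBracket q y z) x +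
        blockBracket q (blockBracket q z x) y = 0) :=
  blockBracket_isLieBracket_general q
end

section
/- An element F ∈ B(q) is ad-locally finite if and only if F is a scalar multiple of L_{0,0}; that is, up to scalars L_{0,0} is the unique ad-locally finite element of B(q). -/
/-!
Order the basis indices by `lexWeight ε : (α, i) ↦ (ε α, i)` in the lexicographic order, with a
sign `ε` for which some index in the support of `F` has positive weight. If `F` is not a multiple
of `L (0, 0)`, the top index `μ` of `F` then has positive weight. For a suitable `β` the structure
constants along `(β, 0) + m • μ` never vanish, so `(ad F) ^ m (L (β, 0))` has top index
`m • μ + (β, 0)`, whose weight grows strictly with `m`: these vectors are linearly independent.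
Conversely, `ad (L (0, 0))` acts diagonally, `L (α, i) ↦ α q • L (α, i)`.
-/

open Finsupp

namespace Module.End

variable {K V : Type*} [Field K] [AddCommGroup V] [Module K V]

def IsLocallyFinite (f : Module.End K V) : Prop :=
  ∀ v : V, FiniteDimensional K (Submodule.span K (Set.range fun m : ℕ => (f ^ m) v))

theorem IsLocallyFinite.of_basis_eigenvectors {ι : Type*} (b : Basis ι K V) (f : Module.End K V)
    (d : ι → K) (hf : ∀ i, f (b i) = d i • b i) : f.IsLocallyFinite := by
  intro v
  set W := Submodule.span K (b '' ((b.repr v).support : Set ι))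
  have : FiniteDimensional K W :=
    FiniteDimensional.span_of_finite K ((Finset.finite_toSet _).image _)
  have hW : W ≤ W.comap f := Submodule.span_le.2 <| by
    rintro _ ⟨i, hi, rfl⟩
    rw [SetLike.mem_coe, Submodule.mem_comap, hf]
    exact W.smul_mem _ (Submodule.subset_span ⟨i, hi, rfl⟩)
  refine Submodule.finiteDimensional_of_le (S₂ := W) (Submodule.span_le.2 ?_)
  rintro _ ⟨m, rfl⟩
  exact pow_apply_mem_of_forall_mem (p := W) m (fun x hx => hW hx) v (b.mem_span_repr_support v)

theorem not_isLocallyFinite_of_linearIndependent {f : Module.End K V} {v : V}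
    (h : LinearIndependent K fun m : ℕ => (f ^ m) v) : ¬f.IsLocallyFinite := fun hf =>
  have := hf v
  Module.Finite.not_linearIndependent_of_infinite _ (linearIndependent_span h)

end Module.End

namespace Module.Basis

section CommRing

variable {K ι B : Type*} [CommRing K] [LieRing B] [LieAlgebra K B] (L : Basis ι K B)

theorem repr_lie [Add ι] (c : ι → ι → K) (hL : ∀ a b, ⁅L a, L b⁆ = c a b • L (a + b)) (x y : B) :
    L.repr ⁅x, y⁆ = ∑ a ∈ (L.repr x).support, ∑ b ∈ (L.repr y).support,
      single (a + b) (L.repr x a * L.repr y b * c a b) := by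
  conv_lhs => rw [← L.linearCombination_repr x, ← L.linearCombination_repr y]
  rw [linearCombination_apply, linearCombination_apply, Finsupp.sum, Finsupp.sum, sum_lie_sum,
    map_sum]
  refine Finset.sum_congr rfl fun a _ => ?_
  rw [map_sum]
  refine Finset.sum_congr rfl fun b _ => ?_
  rw [smul_lie, lie_smul, hL, smul_smul, smul_smul, map_smul, repr_self, smul_single, smul_eq_mul,
    mul_one, mul_assoc]

def IsTopIndex {Γ : Type*} [LE Γ] (φ : ι → Γ) (x : B) (μ : ι) : Prop :=
  L.repr x μ ≠ 0 ∧ ∀ ν, L.repr x ν ≠ 0 → φ ν ≤ φ μ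

theorem isTopIndex_self [Nontrivial K] {Γ : Type*} [Preorder Γ] (φ : ι → Γ) (i : ι) :
    L.IsTopIndex φ (L i) i := by
  refine ⟨by simp, fun ν hν => ?_⟩
  rw [repr_self, single_apply_ne_zero] at hν
  rw [hν.1]

theorem exists_isTopIndex_le {Γ : Type*} [LinearOrder Γ] (φ : ι → Γ) {x : B} {ν : ι}
    (hν : L.repr x ν ≠ 0) : ∃ μ, L.IsTopIndex φ x μ ∧ φ ν ≤ φ μ := by
  obtain ⟨μ, hμ, hmax⟩ := (L.repr x).support.exists_max_image φ ⟨ν, Finsupp.mem_support_iff.2 hν⟩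
  exact ⟨μ, ⟨Finsupp.mem_support_iff.1 hμ, fun a ha => hmax a (Finsupp.mem_support_iff.2 ha)⟩,
    hmax ν (Finsupp.mem_support_iff.2 hν)⟩

end CommRing

section Domain

variable {K ι Γ B : Type*} [CommRing K] [IsDomain K] [LieRing B] [LieAlgebra K B]
  (L : Basis ι K B)

theorem linearIndependent_of_isTopIndex [Preorder Γ] {φ : ι → Γ} {w : ℕ → B} {ρ : ℕ → ι}
    (hw : ∀ m, L.IsTopIndex φ (w m) (ρ m)) (hρ : StrictMono (φ ∘ ρ)) : LinearIndependent K w := by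
  rw [linearIndependent_iff']
  intro s
  induction s using Finset.induction_on_max with
  | empty => simp
  | insert a s hlt ih =>
    intro g hsum
    have has : a ∉ s := fun h => lt_irrefl a (hlt a h)
    have hlow : ∀ i ∈ s, L.repr (w i) (ρ a) = 0 := fun i hi => by
      by_contra h
      exact (hρ (hlt i hi)).not_ge ((hw i).2 _ h)
    have hga : g a = 0 := by
      have h : ∑ i ∈ insert a s, g i * L.repr (w i) (ρ a) = 0 := by
        simpa using congrArg (fun x => L.repr x (ρ a)) hsum
      rw [Finset.sum_insert has, Finset.sum_eq_zero fun i hi => by rw [hlow i hi, mul_zero],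
        add_zero] at h
      exact (mul_eq_zero.1 h).resolve_right (hw a).1
    rw [Finset.sum_insert has, hga, zero_smul, zero_add] at hsum
    intro i hi
    rcases Finset.mem_insert.1 hi with rfl | hi
    · exact hga
    · exact ih g hsum i hi

variable [AddMonoid ι] [AddCommMonoid Γ] [LinearOrder Γ] [IsOrderedCancelAddMonoid Γ]
  {φ : ι →+ Γ} (hφ : Function.Injective φ) (c : ι → ι → K)
  (hL : ∀ a b, ⁅L a, L b⁆ = c a b • L (a + b))
include hφ hL

theorem IsTopIndex.lie {x y : B} {μ τ : ι} (hx : L.IsTopIndex φ x μ) (hy : L.IsTopIndex φ y τ)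
    (hc : c μ τ ≠ 0) : L.IsTopIndex φ ⁅x, y⁆ (μ + τ) := by
  classical
  have hunique : ∀ a b, L.repr x a ≠ 0 → L.repr y b ≠ 0 → a + b = μ + τ → a = μ ∧ b = τ := by
    intro a b ha hb h
    have := (add_eq_add_iff_eq_and_eq (hx.2 a ha) (hy.2 b hb)).1 (by rw [← map_add, h, map_add])
    exact ⟨hφ this.1, hφ this.2⟩
  constructor
  · rw [L.repr_lie c hL, finsetSum_apply,
      Finset.sum_eq_single_of_mem μ (Finsupp.mem_support_iff.2 hx.1), finsetSum_apply,
      Finset.sum_eq_single_of_mem τ (Finsupp.mem_support_iff.2 hy.1), single_eq_same]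
    · exact mul_ne_zero (mul_ne_zero hx.1 hy.1) hc
    · intro b hb hbτ
      exact single_eq_of_ne' fun h =>
        hbτ (hunique μ b hx.1 (Finsupp.mem_support_iff.1 hb) h).2
    · intro a ha haμ
      rw [finsetSum_apply]
      refine Finset.sum_eq_zero fun b hb => single_eq_of_ne' fun h =>
        haμ (hunique a b (Finsupp.mem_support_iff.1 ha) (Finsupp.mem_support_iff.1 hb) h).1
  · intro σ hσ
    rw [L.repr_lie c hL, finsetSum_apply] at hσ
    obtain ⟨a, ha, hσ⟩ := Finset.exists_ne_zero_of_sum_ne_zero hσ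
    rw [finsetSum_apply] at hσ
    obtain ⟨b, hb, hσ⟩ := Finset.exists_ne_zero_of_sum_ne_zero hσ
    obtain rfl : a + b = σ := by_contra fun h => hσ (single_eq_of_ne' h)
    rw [map_add, map_add]
    exact add_le_add (hx.2 a (Finsupp.mem_support_iff.1 ha)) (hy.2 b (Finsupp.mem_support_iff.1 hb))

theorem IsTopIndex.ad_pow {F v : B} {μ τ : ι} (hF : L.IsTopIndex φ F μ)
    (hv : L.IsTopIndex φ v τ) (hc : ∀ m : ℕ, c μ (m • μ + τ) ≠ 0) (m : ℕ) :
    L.IsTopIndex φ ((LieAlgebra.ad K B F ^ m) v) (m • μ + τ) := by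
  induction m with
  | zero => simpa using hv
  | succ m ih =>
    rw [pow_succ', Module.End.mul_apply, LieAlgebra.ad_apply, succ_nsmul', add_assoc]
    exact hF.lie L hφ c hL ih (hc m)

end Domain

theorem not_isLocallyFinite_ad {K ι Γ B : Type*} [Field K] [LieRing B] [LieAlgebra K B]
    (L : Basis ι K B) [AddMonoid ι] [AddCommMonoid Γ] [LinearOrder Γ] [IsOrderedCancelAddMonoid Γ]
    {φ : ι →+ Γ} (hφ : Function.Injective φ) (c : ι → ι → K)
    (hL : ∀ a b, ⁅L a, L b⁆ = c a b • L (a + b)) {F v : B} {μ τ : ι}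
    (hF : L.IsTopIndex φ F μ) (hμ : 0 < φ μ) (hv : L.IsTopIndex φ v τ)
    (hc : ∀ m : ℕ, c μ (m • μ + τ) ≠ 0) : ¬(LieAlgebra.ad K B F).IsLocallyFinite := by
  refine Module.End.not_isLocallyFinite_of_linearIndependent
    (L.linearIndependent_of_isTopIndex (hF.ad_pow L hφ c hL hv hc) fun m n hmn => ?_)
  simp only [Function.comp_apply, map_add, map_nsmul]
  exact add_lt_add_left (nsmul_lt_nsmul_left hμ hmn) _

end Module.Basis

def blockCoeff (q : ℕ) (a b : ℤ × ℕ) : ℤ := b.1 * (a.2 + q) - a.1 * (b.2 + q)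

theorem exists_blockCoeff_nsmul_add_ne_zero {q : ℕ} (hq : 0 < q) (μ : ℤ × ℕ) :
    ∃ β : ℤ, ∀ m : ℕ, blockCoeff q μ (m • μ + (β, 0)) ≠ 0 := by
  -- The coefficient is `β (μ.2 + q) + (m - 1) μ.1 q`: take `β` of the sign of `μ.1`, dominating it.
  by_cases hμ : μ.1 = 0
  · refine ⟨1, fun m => ?_⟩
    simp only [blockCoeff, Prod.fst_add, Prod.snd_add, Prod.smul_fst, Prod.smul_snd, hμ,
      smul_zero, zero_add, zero_mul, sub_zero]
    positivity
  · refine ⟨2 * μ.1, fun m => ?_⟩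
    have : blockCoeff q μ (m • μ + (2 * μ.1, 0)) = μ.1 * (2 * μ.2 + (m + 1) * q) := by
      simp only [blockCoeff, Prod.fst_add, Prod.snd_add, Prod.smul_fst, Prod.smul_snd,
        smul_eq_mul]
      push_cast
      ring
    rw [this]
    exact mul_ne_zero hμ (by positivity)

def lexWeight (ε : ℤ) : ℤ × ℕ →+ ℤ ×ₗ ℤ where
  toFun ν := toLex (ε * ν.1, ν.2)
  map_zero' := by simp
  map_add' a b := by
    rw [← toLex_add]
    simp [mul_add]

@[simp]
theorem lexWeight_apply (ε : ℤ) (ν : ℤ × ℕ) : lexWeight ε ν = toLex (ε * ν.1, (ν.2 : ℤ)) := rfl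

theorem lexWeight_injective {ε : ℤ} (hε : ε ≠ 0) : Function.Injective (lexWeight ε) := by
  intro a b h
  simp only [lexWeight, AddMonoidHom.coe_mk, ZeroHom.coe_mk, toLex_inj, Prod.mk.injEq,
    mul_right_inj' hε, Nat.cast_inj] at h
  exact Prod.ext h.1 h.2

theorem exists_lexWeight_pos {ν : ℤ × ℕ} (hν : ν ≠ 0) : ∃ ε ≠ 0, 0 < lexWeight ε ν := by
  have hlt (ε : ℤ) : 0 < lexWeight ε ν ↔ 0 < ε * ν.1 ∨ 0 = ε * ν.1 ∧ 0 < (ν.2 : ℤ) :=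
    Prod.Lex.toLex_lt_toLex
  obtain ⟨α, i⟩ := ν
  rcases lt_trichotomy α 0 with h | rfl | h
  · exact ⟨-1, by norm_num, (hlt _).2 (.inl (by simpa using h))⟩
  · refine ⟨1, one_ne_zero, (hlt _).2 (.inr ⟨by simp, ?_⟩)⟩
    simpa [Nat.pos_iff_ne_zero] using hν
  · exact ⟨1, one_ne_zero, (hlt _).2 (.inl (by simpa using h))⟩

/-- An element `F` of the Block type Lie algebra `B(q)` is ad-locally finite
(i.e. for every `v`, the span of `{(ad_F)^m v : m ∈ ℤ_{≥0}}` is finite dimensional)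
if and only if `F` is a scalar multiple of `L_{0,0}`. -/
theorem block_adLocallyFinite_iff (q : ℕ) (hq : 0 < q)
    {B : Type} [LieRing B] [LieAlgebra ℂ B]
    (L : Module.Basis (ℤ × ℕ) ℂ B)
    (hL : ∀ (α β : ℤ) (i j : ℕ),
      ⁅L (α, i), L (β, j)⁆ =
        (((β * ((i : ℤ) + q) - α * ((j : ℤ) + q)) : ℤ) : ℂ) • L (α + β, i + j))
    (F : B) :
    (∀ v : B, FiniteDimensional ℂ
        (Submodule.span ℂ (Set.range fun m : ℕ => ((LieAlgebra.ad ℂ B F) ^ m) v))) ↔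
      ∃ c : ℂ, F = c • L (0, 0) := by
  have hbracket : ∀ a b, ⁅L a, L b⁆ = (blockCoeff q a b : ℂ) • L (a + b) :=
    fun a b => hL a.1 b.1 a.2 b.2
  constructor
  · intro hfin
    by_contra hF
    have hspan : F ∉ Submodule.span ℂ (L '' {0}) := by
      simpa [Submodule.mem_span_singleton, eq_comm, Prod.mk_zero_zero] using hF
    obtain ⟨ν, hν, hν0⟩ := Set.not_subset.1 (mt L.mem_span_image.2 hspan)
    obtain ⟨ε, hε, hpos⟩ := exists_lexWeight_pos hν0
    obtain ⟨μ, hμ, hνμ⟩ := L.exists_isTopIndex_le (lexWeight ε) (Finsupp.mem_support_iff.1 hν)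
    obtain ⟨β, hβ⟩ := exists_blockCoeff_nsmul_add_ne_zero hq μ
    exact L.not_isLocallyFinite_ad (lexWeight_injective hε) _ hbracket hμ (hpos.trans_le hνμ)
      (L.isTopIndex_self _ (β, 0)) (fun m => Int.cast_ne_zero.2 (hβ m)) hfin
  · rintro ⟨c, rfl⟩
    refine Module.End.IsLocallyFinite.of_basis_eigenvectors L _ (fun τ => c * (τ.1 * q : ℤ))
      fun τ => ?_
    rw [LieAlgebra.ad_apply, smul_lie, hbracket, smul_smul]
    simp [blockCoeff, Prod.mk_zero_zero]
end

section
/- The element L_{0,0} of B(q) is not ad-locally nilpotent; consequently B(q) contains no nonzero ad-locally nilpotent elements. -/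
/-!
Order the indices `ℤ × ℕ` lexicographically. A bracket of basis vectors is a multiple of the
basis vector at the sum of the indices, so if `s₀` is the largest index in the support of
`F ≠ 0`, the coefficient of `(ad F)^N L_t` at `N • s₀ + t` is `F_{s₀}^N ∏_{m<N} c(s₀, m • s₀ + t)`
with `c` the structure constant. Choosing `t = (s₀.1 ± 1, 0)`, with the sign of `s₀.1`, makes
every factor nonzero, so no power of `ad F` kills `L_t`.
-/

open Finset

namespace LieAlgebra

variable {K A M : Type*} [CommRing K] [LieRing A] [LieAlgebra K A] [AddCommMonoid M]
  (b : Module.Basis M K A) {c : M → M → K} (hc : ∀ s t, ⁅b s, b t⁆ = c s t • b (s + t))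
include hc

theorem basis_repr_lie (x y : A) :
    b.repr ⁅x, y⁆ = ∑ s ∈ (b.repr x).support, ∑ t ∈ (b.repr y).support,
      Finsupp.single (s + t) (b.repr x s * b.repr y t * c s t) := by
  conv_lhs => rw [← b.linearCombination_repr x, ← b.linearCombination_repr y]
  rw [Finsupp.linearCombination_apply, Finsupp.linearCombination_apply, Finsupp.sum,
    Finsupp.sum, sum_lie_sum]
  simp only [smul_lie, lie_smul, hc, smul_smul, map_sum, map_smul, Module.Basis.repr_self,
    Finsupp.smul_single, smul_eq_mul, mul_one]
  refine sum_congr rfl fun s _ => sum_congr rfl fun t _ => congrArg _ ?_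
  ring

variable [LinearOrder M] [IsOrderedCancelAddMonoid M] {x y : A} {s₀ t₀ : M}

theorem basis_repr_lie_support_le (hx : ∀ s ∈ (b.repr x).support, s ≤ s₀)
    (hy : ∀ t ∈ (b.repr y).support, t ≤ t₀) : ∀ u ∈ (b.repr ⁅x, y⁆).support, u ≤ s₀ + t₀ := by
  intro u hu
  rw [basis_repr_lie b hc] at hu
  obtain ⟨s, hs, hu⟩ := Finsupp.mem_support_finsetSum u hu
  obtain ⟨t, ht, hu⟩ := Finsupp.mem_support_finsetSum u hu
  rw [Finset.mem_singleton.mp (Finsupp.support_single_subset hu)]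
  exact add_le_add (hx s hs) (hy t ht)

theorem basis_repr_lie_add (hx : ∀ s ∈ (b.repr x).support, s ≤ s₀)
    (hy : ∀ t ∈ (b.repr y).support, t ≤ t₀) :
    b.repr ⁅x, y⁆ (s₀ + t₀) = b.repr x s₀ * b.repr y t₀ * c s₀ t₀ := by
  rw [basis_repr_lie b hc, Finsupp.finsetSum_apply, sum_eq_single s₀]
  · rw [Finsupp.finsetSum_apply, sum_eq_single t₀, Finsupp.single_eq_same]
    · exact fun t _ htt₀ => Finsupp.single_eq_of_ne fun h => htt₀ (add_left_cancel h).symm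
    · intro ht₀
      simp [Finsupp.notMem_support_iff.mp ht₀]
  · intro s hs hss₀
    rw [Finsupp.finsetSum_apply]
    refine sum_eq_zero fun t ht => Finsupp.single_eq_of_ne fun h => hss₀ ?_
    exact ((add_eq_add_iff_eq_and_eq (hx s hs) (hy t ht)).mp h.symm).1
  · intro hs₀
    simp [Finsupp.notMem_support_iff.mp hs₀]

theorem basis_repr_ad_pow_basis {F : A} (hF : ∀ s ∈ (b.repr F).support, s ≤ s₀) (t : M)
    (N : ℕ) :
    (∀ u ∈ (b.repr ((ad K A F ^ N) (b t))).support, u ≤ N • s₀ + t) ∧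
      b.repr ((ad K A F ^ N) (b t)) (N • s₀ + t) =
        b.repr F s₀ ^ N * ∏ m ∈ range N, c s₀ (m • s₀ + t) := by
  induction N with
  | zero =>
    simp only [pow_zero, Module.End.one_apply, zero_smul, zero_add, Module.Basis.repr_self,
      Finsupp.single_eq_same, range_zero, prod_empty, mul_one, and_true]
    exact fun u hu => (Finset.mem_singleton.mp (Finsupp.support_single_subset hu)).le
  | succ n ih =>
    have hpow : (ad K A F ^ (n + 1)) (b t) = ⁅F, (ad K A F ^ n) (b t)⁆ := by
      rw [pow_succ', Module.End.mul_apply, ad_apply]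
    have hidx : (n + 1) • s₀ + t = s₀ + (n • s₀ + t) := by
      rw [succ_nsmul']; abel
    rw [hpow, hidx, basis_repr_lie_add b hc hF ih.1, ih.2, prod_range_succ]
    exact ⟨basis_repr_lie_support_le b hc hF ih.1, by ring⟩

theorem exists_forall_ad_pow_ne_zero [IsDomain K] {F : A} (hF : F ≠ 0)
    (hc₀ : ∀ s, ∃ t, ∀ m : ℕ, c s (m • s + t) ≠ 0) : ∃ v, ∀ N, (ad K A F ^ N) v ≠ 0 := by
  have hsupp : (b.repr F).support.Nonempty := by simpa using hF
  set s₀ := (b.repr F).support.max' hsupp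
  obtain ⟨t, ht⟩ := hc₀ s₀
  refine ⟨b t, fun N hN => ?_⟩
  have hmax : ∀ s ∈ (b.repr F).support, s ≤ s₀ := fun s hs => le_max' _ s hs
  have hlead := (basis_repr_ad_pow_basis b hc hmax t N).2
  rw [hN, map_zero, Finsupp.zero_apply] at hlead
  have hF₀ : b.repr F s₀ ≠ 0 := Finsupp.mem_support_iff.mp (max'_mem _ hsupp)
  exact mul_ne_zero (pow_ne_zero N hF₀) (prod_ne_zero_iff.mpr fun m _ => ht m) hlead.symm

end LieAlgebra

def blockStructureConst (q : ℕ) (s t : ℤ × ℕ) : ℤ := t.1 * (s.2 + q) - s.1 * (t.2 + q)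

theorem blockStructureConst_nsmul_add (q : ℕ) (s : ℤ × ℕ) (m : ℕ) (β : ℤ) :
    blockStructureConst q s (m • s + (β, 0)) = m * s.1 * q + β * (s.2 + q) - s.1 * q := by
  simp only [blockStructureConst, Prod.fst_add, Prod.snd_add, Prod.smul_fst, Prod.smul_snd,
    add_zero]
  simp only [nsmul_eq_mul, smul_eq_mul]
  push_cast
  ring

theorem exists_forall_blockStructureConst_ne_zero {q : ℕ} (hq : 0 < q) (s : ℤ × ℕ) :
    ∃ t : ℤ × ℕ, ∀ m : ℕ, blockStructureConst q s (m • s + t) ≠ 0 := by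
  have hq₀ : (0 : ℤ) < q := by exact_mod_cast hq
  have hi : (0 : ℤ) ≤ s.2 := s.2.cast_nonneg
  -- for `t = (s.1 ± 1, 0)` the constant is `m s.1 q + s.1 s.2 ± (s.2 + q)`: all terms of one sign
  rcases le_or_gt 0 s.1 with ha | ha
  · refine ⟨(s.1 + 1, 0), fun m => ?_⟩
    have hm : (0 : ℤ) ≤ m * s.1 := mul_nonneg m.cast_nonneg ha
    rw [blockStructureConst_nsmul_add]
    nlinarith [mul_nonneg hm hq₀.le, mul_nonneg ha hi]
  · refine ⟨(s.1 - 1, 0), fun m => ?_⟩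
    have hm : m * s.1 ≤ 0 := mul_nonpos_of_nonneg_of_nonpos m.cast_nonneg ha.le
    rw [blockStructureConst_nsmul_add]
    nlinarith [mul_nonpos_of_nonpos_of_nonneg hm hq₀.le, mul_nonpos_of_nonpos_of_nonneg ha.le hi]

/-- The element `L_{0,0}` of the Block type Lie algebra `B(q)` is not ad-locally
nilpotent; consequently `B(q)` contains no nonzero ad-locally nilpotent elements.
(`F` is ad-locally nilpotent if for every `v` there is `N > 0` with `(ad_F)^N v = 0`.) -/
theorem block_not_adLocallyNilpotent (q : ℕ) (hq : 0 < q)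
    {B : Type} [LieRing B] [LieAlgebra ℂ B]
    (L : Module.Basis (ℤ × ℕ) ℂ B)
    (hL : ∀ (α β : ℤ) (i j : ℕ),
      ⁅L (α, i), L (β, j)⁆ =
        (((β * ((i : ℤ) + q) - α * ((j : ℤ) + q)) : ℤ) : ℂ) • L (α + β, i + j)) :
    (¬ ∀ v : B, ∃ N : ℕ, 0 < N ∧ ((LieAlgebra.ad ℂ B (L (0, 0))) ^ N) v = 0) ∧
    (∀ F : B, F ≠ 0 →
      ¬ ∀ v : B, ∃ N : ℕ, 0 < N ∧ ((LieAlgebra.ad ℂ B F) ^ N) v = 0) := by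
  set b := L.reindex toLex
  have hb (s t : ℤ ×ₗ ℕ) :
      ⁅b s, b t⁆ = (blockStructureConst q (ofLex s) (ofLex t) : ℂ) • b (s + t) := by
    have h := hL (ofLex s).1 (ofLex t).1 (ofLex s).2 (ofLex t).2
    rw [← Prod.mk_add_mk] at h
    simpa [b, blockStructureConst] using h
  have hb₀ (s : ℤ ×ₗ ℕ) : ∃ t, ∀ m : ℕ,
      (blockStructureConst q (ofLex s) (ofLex (m • s + t)) : ℂ) ≠ 0 := by
    obtain ⟨t, ht⟩ := exists_forall_blockStructureConst_ne_zero hq (ofLex s)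
    exact ⟨toLex t, fun m => by simpa using ht m⟩
  have hnil (F : B) (hF : F ≠ 0) :
      ¬ ∀ v : B, ∃ N : ℕ, 0 < N ∧ ((LieAlgebra.ad ℂ B F) ^ N) v = 0 := fun h => by
    obtain ⟨v, hv⟩ := LieAlgebra.exists_forall_ad_pow_ne_zero b hb hF hb₀
    obtain ⟨N, -, hN⟩ := h v
    exact hv N hN
  exact ⟨hnil _ (L.ne_zero _), hnil⟩
end

section
/- For every μ ∈ ℂ* the map L_α ↦ μ^α L_α and for every s ∈ {±1} the map L_α ↦ s L_{sα} are Lie algebra automorphisms of the Witt algebra Vir; moreover every automorphism of Vir has the form L_α ↦ s μ^α L_{sα} for some μ ∈ ℂ* and s ∈ {±1}, so that Aut(Vir) is isomorphic to the semidirect product ℂ* ⋊ ℤ/2ℤ. -/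
/-- The action of the order-two group `ℤˣ ≅ ℤ/2ℤ` on `ℂ* = ℂˣ` in which the nontrivial
element acts by inversion `μ ↦ μ⁻¹`. -/
def wittAct : ℤˣ →* MulAut ℂˣ where
  toFun s := if s = 1 then MulEquiv.refl ℂˣ else MulEquiv.inv ℂˣ
  map_one' := rfl
  map_mul' a b := by
    rcases Int.units_eq_one_or a with ha | ha <;> rcases Int.units_eq_one_or b with hb | hb <;>
      subst ha <;> subst hb <;> ext x <;> simp [MulAut.mul_apply]

/-- The automorphism group of a complex Lie algebra, realized as the subgroup of linear
automorphisms preserving the bracket. -/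
def lieAutGroup (B : Type) [LieRing B] [LieAlgebra ℂ B] : Subgroup (B ≃ₗ[ℂ] B) where
  carrier := {σ | ∀ x y : B, σ ⁅x, y⁆ = ⁅σ x, σ y⁆}
  one_mem' := by intro x y; rfl
  mul_mem' := by
    intro σ τ hσ hτ x y
    show σ (τ ⁅x, y⁆) = ⁅σ (τ x), σ (τ y)⁆
    rw [hτ, hσ]
  inv_mem' := by
    intro σ hσ x y
    apply σ.injective
    have h : ∀ z : B, σ (σ⁻¹ z) = z := fun z => σ.apply_symm_apply z
    rw [hσ, h, h, h]


/-!
Let `σ` be an automorphism and `v = σ L₀`. Since `⁅v, σ Lₙ⁆ = n • σ Lₙ`, the vectors `σ Lₙ` form an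
eigenbasis of `ad v`. If `v` had a nonzero coefficient in some positive degree, with `b` the
largest such, then comparing top-degree terms in `⁅v, e⁆ = c • e` shows that every eigenvector `e`
lives in degrees `≤ b`; but the eigenvectors span, and `L (b + 1)` does not. Reflecting the basis,
`L α ↦ -L (-α)`, rules out negative degrees, so `v = c • L₀`. Then each `σ Lₙ` is an eigenvector of
`ad L₀` with eigenvalue `n / c`, i.e. `σ Lₙ = dₙ • L (t n)` with `c t = 1`; running the argument for
`σ⁻¹` gives `t = ±1`, and the bracket relations make `n ↦ t dₙ` multiplicative, hence `n ↦ μⁿ`.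
Finally, the maps `L α ↦ s μ^(s α) L (s α)` compose exactly as the semidirect product `ℂˣ ⋊ ℤˣ`.
-/

open Module Finset

theorem LinearMap.map_lie_of_basis {R ι L₁ L₂ : Type*} [CommRing R] [LieRing L₁] [LieAlgebra R L₁]
    [LieRing L₂] [LieAlgebra R L₂] (b : Basis ι R L₁) (f : L₁ →ₗ[R] L₂)
    (h : ∀ i j, f ⁅b i, b j⁆ = ⁅f (b i), f (b j)⁆) (x y : L₁) :
    f ⁅x, y⁆ = ⁅f x, f y⁆ := by
  have hB : ((LieModule.toEnd R L₁ L₁ : L₁ →ₗ[R] Module.End R L₁).compr₂ f) =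
      (LieModule.toEnd R L₂ L₂ : L₂ →ₗ[R] Module.End R L₂).compl₁₂ f f :=
    LinearMap.ext_basis b b fun i j => by simpa using h i j
  simpa using LinearMap.congr_fun₂ hB x y

theorem Module.Basis.smul_apply_eq_apply_iff {ι R M : Type*} [Semiring R] [Nontrivial R]
    [AddCommMonoid M] [Module R M] (b : Basis ι R M) {c : R} {i j : ι} :
    c • b i = b j ↔ c = 1 ∧ i = j := by
  constructor
  · intro h
    have := congrArg b.repr h
    simp only [map_smul, b.repr_self, Finsupp.smul_single, smul_eq_mul, mul_one,
      Finsupp.single_eq_single_iff] at this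
    rcases this with ⟨hij, hc⟩ | ⟨-, h10⟩
    · exact ⟨hc, hij⟩
    · exact absurd h10 one_ne_zero
  · rintro ⟨rfl, rfl⟩
    exact one_smul R _

theorem Module.Basis.eq_repr_smul_of_support_subset {ι R M : Type*} [Semiring R] [AddCommMonoid M]
    [Module R M] (b : Basis ι R M) {x : M} {i : ι} (h : (b.repr x).support ⊆ {i}) :
    x = b.repr x i • b i := by
  obtain ⟨c, hc⟩ := Finsupp.support_subset_singleton'.1 h
  conv_lhs => rw [← b.repr.symm_apply_apply x, hc]
  rw [b.repr_symm_single, hc, Finsupp.single_eq_same]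

theorem Finsupp.exists_ge_forall_gt_eq_zero {ι M : Type*} [LinearOrder ι] [Zero M] {f : ι →₀ M}
    {i : ι} (hi : f i ≠ 0) : ∃ j, i ≤ j ∧ f j ≠ 0 ∧ ∀ k, j < k → f k = 0 := by
  have hmem : i ∈ f.support := Finsupp.mem_support_iff.2 hi
  refine ⟨f.support.max' ⟨i, hmem⟩, f.support.le_max' i hmem,
    Finsupp.mem_support_iff.1 (f.support.max'_mem _), fun k hk => ?_⟩
  exact Finsupp.notMem_support_iff.1 fun hk' => (f.support.le_max' k hk').not_gt hk

theorem eq_zpow_of_map_add_of_ne {G : Type*} [CommGroupWithZero G] {f : ℤ → G}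
    (hf0 : ∀ n, f n ≠ 0) (hf : ∀ m n, m ≠ n → f (m + n) = f m * f n) (n : ℤ) :
    f n = f 1 ^ n := by
  have h0 : f 0 = 1 := by
    have h := hf 0 1 zero_ne_one
    rw [zero_add] at h
    exact (mul_eq_right₀ (hf0 1)).1 h.symm
  have hadd : ∀ m n, f (m + n) = f m * f n := by
    intro m n
    rcases ne_or_eq m n with h | rfl
    · exact hf m n h
    -- split `m + m` into summands which are pairwise distinct from each other and from `±m`
    obtain ⟨k, hk⟩ : ∃ k, k = |m| + 1 := ⟨_, rfl⟩
    have := le_abs_self m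
    have := neg_abs_le m
    calc f (m + m) = f ((m + -k) + (m + k)) := by ring_nf
      _ = f m * f m * (f (-k) * f k) := by
        rw [hf _ _ (by omega), hf _ _ (by omega), hf _ _ (by omega), mul_mul_mul_comm]
      _ = f m * f m := by rw [← hf (-k) k (by omega), neg_add_cancel, h0, mul_one]
  induction n using Int.induction_on with
  | zero => rw [h0, zpow_zero]
  | succ n ih => rw [hadd, ih, zpow_add_one₀ (hf0 1)]
  | pred n ih =>
    have h := hadd (-n - 1) 1
    rw [sub_add_cancel, ih] at h
    rw [zpow_sub_one₀ (hf0 1), h, mul_inv_cancel_right₀ (hf0 1)]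

section Witt

variable {K W : Type*} [Field K] [LieRing W] [LieAlgebra K W]

def IsWittBasis (L : Basis ℤ K W) : Prop :=
  ∀ α β : ℤ, ⁅L α, L β⁆ = ((β - α : ℤ) : K) • L (α + β)

theorem IsWittBasis.lie {L : Basis ℤ K W} (hL : IsWittBasis L) (α β : ℤ) :
    ⁅L α, L β⁆ = ((β - α : ℤ) : K) • L (α + β) :=
  hL α β

namespace Module.Basis

variable (L : Basis ℤ K W)

-- the scaling `L α ↦ μ^α • L α` after the flip `L α ↦ s • L (s α)`
noncomputable def twist (μ : Kˣ) (s : ℤˣ) : W ≃ₗ[K] W :=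
  L.equiv (L.unitsSMul fun β => Units.map (Int.castRingHom K : ℤ →* K) s * μ ^ β) (Units.mulLeft s)

theorem twist_apply (μ : Kˣ) (s : ℤˣ) (α : ℤ) :
    L.twist μ s (L α) = (((s : ℤ) : K) * (μ : K) ^ ((s : ℤ) * α)) • L (s * α) := by
  rw [twist, Basis.equiv_apply, Basis.unitsSMul_apply, Units.smul_def]
  simp

noncomputable def reflect : Basis ℤ K W :=
  (L.reindex (Equiv.neg ℤ)).unitsSMul fun _ => -1

theorem reflect_apply (α : ℤ) : L.reflect α = -L (-α) := by
  rw [reflect, Basis.unitsSMul_apply, Basis.reindex_apply]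
  simp

theorem reflect_repr (x : W) (γ : ℤ) : L.reflect.repr x γ = -L.repr x (-γ) := by
  rw [reflect, Basis.repr_unitsSMul, Basis.repr_reindex_apply]
  simp

end Module.Basis

namespace IsWittBasis

section

variable {L : Basis ℤ K W} (hL : IsWittBasis L)
include hL

theorem reflect : IsWittBasis L.reflect := by
  intro α β
  simp only [Basis.reflect_apply, neg_lie, lie_neg, neg_neg, hL.lie, neg_add, smul_neg]
  push_cast
  module

theorem twist_map_lie (μ : Kˣ) (s : ℤˣ) (x y : W) :
    L.twist μ s ⁅x, y⁆ = ⁅L.twist μ s x, L.twist μ s y⁆ := by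
  refine LinearMap.map_lie_of_basis L (L.twist μ s).toLinearMap (fun α β => ?_) x y
  simp only [LinearEquiv.coe_coe, hL.lie, map_smul, Basis.twist_apply, smul_lie, lie_smul,
    smul_smul, mul_add, zpow_add₀ (Units.ne_zero μ)]
  congr 1
  rcases Int.units_eq_one_or s with rfl | rfl <;> push_cast <;> ring

theorem repr_lie (x y : W) (γ : ℤ) :
    L.repr ⁅x, y⁆ γ = ∑ α ∈ (L.repr x).support, ∑ β ∈ (L.repr y).support,
      if α + β = γ then L.repr x α * L.repr y β * ((β - α : ℤ) : K) else 0 := by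
  conv_lhs => rw [← L.linearCombination_repr x, ← L.linearCombination_repr y]
  simp only [Finsupp.linearCombination_apply, Finsupp.sum, sum_lie, lie_sum, smul_lie, lie_smul,
    hL.lie, map_sum, map_smul, L.repr_self, Finsupp.coe_finsetSum, Finset.sum_apply,
    Finsupp.smul_apply, Finsupp.single_apply, smul_eq_mul, mul_sum]
  rw [sum_comm]
  refine sum_congr rfl fun α _ => sum_congr rfl fun β _ => ?_
  split_ifs <;> ring

theorem repr_lie_add_of_forall_gt {x y : W} {a b : ℤ} (hx : ∀ α, a < α → L.repr x α = 0)
    (hy : ∀ β, b < β → L.repr y β = 0) :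
    L.repr ⁅x, y⁆ (a + b) = L.repr x a * L.repr y b * ((b - a : ℤ) : K) := by
  have hx' : ∀ α ∈ (L.repr x).support, α ≤ a := fun α hα =>
    not_lt.1 fun h => Finsupp.mem_support_iff.1 hα (hx α h)
  have hy' : ∀ β ∈ (L.repr y).support, β ≤ b := fun β hβ =>
    not_lt.1 fun h => Finsupp.mem_support_iff.1 hβ (hy β h)
  rw [hL.repr_lie, sum_eq_single a, sum_eq_single b, if_pos rfl]
  · intro β hβ hβb
    rw [if_neg (by have := hy' β hβ; omega)]
  · intro hb
    rw [Finsupp.notMem_support_iff.1 hb]; simp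
  · intro α hα hαa
    refine sum_eq_zero fun β hβ => if_neg ?_
    have := hx' α hα; have := hy' β hβ; omega
  · intro ha
    simp [Finsupp.notMem_support_iff.1 ha]

theorem repr_basis_zero_lie (y : W) (γ : ℤ) : L.repr ⁅L 0, y⁆ γ = γ * L.repr y γ := by
  have h : (L.coord γ).comp (LieModule.toEnd K W W (L 0)) = (γ : K) • L.coord γ :=
    L.ext fun β => by
      by_cases hβ : β = γ
      · subst hβ; simp [hL.lie]
      · simp [hL.lie, hβ]
  simpa using LinearMap.congr_fun h y

end

variable [CharZero K] {L : Basis ℤ K W} (hL : IsWittBasis L)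
include hL

theorem repr_eq_zero_of_lie_eq_smul {v e : W} {b : ℤ} {c : K} (hb : 0 < b) (hvb : L.repr v b ≠ 0)
    (hv : ∀ α, b < α → L.repr v α = 0) (he : ⁅v, e⁆ = c • e) {α : ℤ} (hα : b < α) :
    L.repr e α = 0 := by
  by_contra heα
  obtain ⟨q, hαq, heq, he_gt⟩ := Finsupp.exists_ge_forall_gt_eq_zero heα
  have h := hL.repr_lie_add_of_forall_gt hv he_gt
  rw [he, map_smul, Finsupp.smul_apply, he_gt (b + q) (by omega), smul_zero] at h
  exact mul_ne_zero (mul_ne_zero hvb heq) (Int.cast_ne_zero.2 (by omega)) h.symm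

theorem repr_map_basis_zero_of_pos (σ : W ≃ₗ⁅K⁆ W) {γ : ℤ} (hγ : 0 < γ) :
    L.repr (σ (L 0)) γ = 0 := by
  by_contra hvγ
  obtain ⟨b, hγb, hvb, hv⟩ := Finsupp.exists_ge_forall_gt_eq_zero hvγ
  have hσL : ∀ n, ∀ α, b < α → L.repr (σ (L n)) α = 0 := fun n α =>
    hL.repr_eq_zero_of_lie_eq_smul (hγ.trans_le hγb) hvb hv
      (by rw [← σ.map_lie, hL.lie, map_smul, sub_zero, zero_add])
  have h : (L.coord (b + 1)).comp (σ : W →ₗ[K] W) = 0 :=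
    L.ext fun n => hσL n (b + 1) (lt_add_one b)
  simpa using LinearMap.congr_fun h (σ.symm (L (b + 1)))

theorem map_basis_zero_eq_smul (σ : W ≃ₗ⁅K⁆ W) : σ (L 0) = L.repr (σ (L 0)) 0 • L 0 := by
  refine L.eq_repr_smul_of_support_subset fun γ hγ => mem_singleton.2 ?_
  rw [Finsupp.mem_support_iff] at hγ
  rcases lt_trichotomy γ 0 with hneg | h0 | hpos
  · have h := hL.reflect.repr_map_basis_zero_of_pos σ (neg_pos.2 hneg)
    simp [Basis.reflect_apply, Basis.reflect_repr] at h
    exact absurd h hγ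
  · exact h0
  · exact absurd (hL.repr_map_basis_zero_of_pos σ hpos) hγ

theorem exists_map_basis_eq_smul (σ : W ≃ₗ⁅K⁆ W) :
    ∃ (t : ℤ) (d : ℤ → K), ∀ n, σ (L n) = d n • L (t * n) := by
  set c := L.repr (σ (L 0)) 0
  have hv : σ (L 0) = c • L 0 := hL.map_basis_zero_eq_smul σ
  have hc : c ≠ 0 := by
    intro h
    rw [h, zero_smul] at hv
    exact L.ne_zero 0 (σ.injective (hv.trans (map_zero σ).symm))
  have heig : ∀ n γ, L.repr (σ (L n)) γ ≠ 0 → c * γ = n := by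
    intro n γ hne
    have h := congrArg (fun x => L.repr x γ) (σ.map_lie (L 0) (L n))
    simp only [hL.lie, sub_zero, zero_add, map_smul, Finsupp.smul_apply, smul_eq_mul, hv, smul_lie,
      hL.repr_basis_zero_lie] at h
    exact mul_right_cancel₀ hne (by rw [h]; ring)
  obtain ⟨t, ht⟩ := Finsupp.support_nonempty_iff.2 <|
    (map_ne_zero_iff _ L.repr.injective).2 <| (map_ne_zero_iff σ σ.injective).2 (L.ne_zero 1)
  have hct : c * t = 1 := by exact_mod_cast heig 1 t (Finsupp.mem_support_iff.1 ht)
  refine ⟨t, fun n => L.repr (σ (L n)) (t * n), fun n =>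
    L.eq_repr_smul_of_support_subset fun γ hγ => mem_singleton.2 ?_⟩
  have h := heig n γ (Finsupp.mem_support_iff.1 hγ)
  have hγ' : (γ : K) = ((t * n : ℤ) : K) :=
    mul_left_cancel₀ hc (by rw [h]; push_cast; rw [← mul_assoc, hct, one_mul])
  exact_mod_cast hγ'

theorem exists_map_basis_eq (σ : W ≃ₗ⁅K⁆ W) :
    ∃ (μ : K) (s : ℤ), μ ≠ 0 ∧ (s = 1 ∨ s = -1) ∧
      ∀ α : ℤ, σ (L α) = ((s : K) * μ ^ α) • L (s * α) := by
  obtain ⟨t, d, hσ⟩ := hL.exists_map_basis_eq_smul σ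
  obtain ⟨t', d', hσ'⟩ := hL.exists_map_basis_eq_smul σ.symm
  have ht : t = 1 ∨ t = -1 := by
    have h : (d' 1 * d (t' * 1)) • L (t * (t' * 1)) = L 1 := by
      conv_rhs => rw [← σ.apply_symm_apply (L 1), hσ', map_smul, hσ, smul_smul]
    exact Int.eq_one_or_neg_one_of_mul_eq_one (by simpa using (L.smul_apply_eq_apply_iff.1 h).2)
  have hd0 : ∀ n, d n ≠ 0 := fun n => by
    have h := (map_ne_zero_iff σ σ.injective).2 (L.ne_zero n)
    rw [hσ n] at h
    exact left_ne_zero_of_smul h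
  have hd : ∀ m n, m ≠ n → (t : K) * d m * d n = d (m + n) := by
    intro m n hmn
    have h := σ.map_lie (L m) (L n)
    rw [hσ m, hσ n, hL.lie, map_smul, hσ (m + n), smul_lie, lie_smul, hL.lie, mul_add] at h
    simp only [smul_smul] at h
    have h' := smul_left_injective K (L.ne_zero _) h
    have hmn' : ((n - m : ℤ) : K) ≠ 0 := Int.cast_ne_zero.2 (sub_ne_zero.2 hmn.symm)
    refine mul_left_cancel₀ hmn' ?_
    rw [h']
    push_cast; ring
  have hf := eq_zpow_of_map_add_of_ne (f := fun n => (t : K) * d n)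
    (fun n => mul_ne_zero (Int.cast_ne_zero.2 (by omega)) (hd0 n))
    (fun m n hmn => by rw [← hd m n hmn]; ring)
  have htt : (t : K) * t = 1 := by rcases ht with rfl | rfl <;> norm_num
  refine ⟨t * d 1, t, mul_ne_zero (Int.cast_ne_zero.2 (by omega)) (hd0 1), ht, fun α => ?_⟩
  rw [hσ α, ← hf α, ← mul_assoc, htt, one_mul]

end IsWittBasis

end Witt

section Complex

variable {W : Type} [LieRing W] [LieAlgebra ℂ W]

theorem wittAct_zpow_mul (s : ℤˣ) (μ : ℂˣ) (k : ℤ) :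
    ((wittAct s μ : ℂˣ) : ℂ) ^ ((s : ℤ) * k) = (μ : ℂ) ^ k := by
  rcases Int.units_eq_one_or s with rfl | rfl
  · simp [wittAct]
  · rw [show wittAct (-1) μ = μ⁻¹ from rfl]
    simp

def lieEquivOfMemLieAutGroup {σ : W ≃ₗ[ℂ] W} (hσ : σ ∈ lieAutGroup W) : W ≃ₗ⁅ℂ⁆ W :=
  { σ with map_lie' := hσ _ _ }

namespace IsWittBasis

variable {L : Basis ℤ ℂ W} (hL : IsWittBasis L)

noncomputable def twistHom : ℂˣ ⋊[wittAct] ℤˣ →* lieAutGroup W where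
  toFun x := ⟨L.twist x.left x.right, hL.twist_map_lie x.left x.right⟩
  map_one' := Subtype.ext <| L.ext' fun α => by simp [Basis.twist_apply]
  map_mul' x y := Subtype.ext <| L.ext' fun α => by
    change L.twist (x * y).left (x * y).right (L α) =
      L.twist x.left x.right (L.twist y.left y.right (L α))
    rw [Basis.twist_apply, Basis.twist_apply, map_smul, Basis.twist_apply, smul_smul,
      SemidirectProduct.mul_left, SemidirectProduct.mul_right, Units.val_mul, Units.val_mul,
      mul_assoc (x.right : ℤ)]
    congr 1
    rw [mul_zpow, wittAct_zpow_mul]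
    push_cast; ring

theorem twistHom_apply (x : ℂˣ ⋊[wittAct] ℤˣ) (α : ℤ) :
    (hL.twistHom x : W ≃ₗ[ℂ] W) (L α) =
      (((x.right : ℤ) : ℂ) * (x.left : ℂ) ^ ((x.right : ℤ) * α)) • L (x.right * α) :=
  L.twist_apply _ _ α

theorem twistHom_injective : Function.Injective hL.twistHom := by
  refine (injective_iff_map_eq_one _).2 fun ⟨μ, s⟩ h => ?_
  have h' : ∀ α, (hL.twistHom ⟨μ, s⟩ : W ≃ₗ[ℂ] W) (L α) = L α := fun α => by rw [h]; rfl
  have hs : s = 1 := by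
    have := (L.smul_apply_eq_apply_iff.1 ((hL.twistHom_apply _ 0).symm.trans (h' 0))).1
    rcases Int.units_eq_one_or s with rfl | rfl
    · rfl
    · norm_num at this
  subst hs
  have hμ := (L.smul_apply_eq_apply_iff.1 ((hL.twistHom_apply _ 1).symm.trans (h' 1))).1
  simp only [Units.val_one, Int.cast_one, one_mul, zpow_one] at hμ
  exact SemidirectProduct.ext (Units.ext hμ) rfl

theorem twistHom_surjective : Function.Surjective hL.twistHom := by
  rintro ⟨σ, hσ⟩
  obtain ⟨μ, s, hμ, hs, hσL⟩ := hL.exists_map_basis_eq (lieEquivOfMemLieAutGroup hσ)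
  obtain ⟨s, rfl⟩ := Int.isUnit_iff.2 hs
  refine ⟨⟨Units.mk0 μ hμ ^ (s : ℤ), s⟩, Subtype.ext <| L.ext' fun α => ?_⟩
  change (hL.twistHom _ : W ≃ₗ[ℂ] W) (L α) = lieEquivOfMemLieAutGroup hσ (L α)
  rw [hL.twistHom_apply, hσL]
  congr 2
  rw [Units.val_zpow_eq_zpow_val, Units.val_mk0, ← zpow_mul, ← mul_assoc, ← Units.val_mul,
    Int.units_mul_self, Units.val_one, one_mul]

end IsWittBasis

end Complex

/-- For the Witt algebra `Vir` (basis `{L_α : α ∈ ℤ}`, bracket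
`[L_α, L_β] = (β − α) L_{α+β}`):
(1) for every `μ ∈ ℂ*` the map `L_α ↦ μ^α L_α` is an automorphism;
(2) for every `s ∈ {±1}` the map `L_α ↦ s L_{sα}` is an automorphism;
(3) every automorphism has the form `L_α ↦ s μ^α L_{sα}` with `μ ∈ ℂ*`, `s ∈ {±1}`;
(4) `Aut(Vir) ≅ ℂ* ⋊ ℤ/2ℤ` (with `ℤ/2ℤ` acting by inversion). -/
theorem witt_automorphisms
    {W : Type} [LieRing W] [LieAlgebra ℂ W]
    (L : Module.Basis ℤ ℂ W)
    (hL : ∀ α β : ℤ, ⁅L α, L β⁆ = ((β - α : ℤ) : ℂ) • L (α + β)) :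
    (∀ μ : ℂ, μ ≠ 0 → ∃ σ : W ≃ₗ[ℂ] W, σ ∈ lieAutGroup W ∧
      ∀ α : ℤ, σ (L α) = μ ^ α • L α) ∧
    (∀ s : ℤ, (s = 1 ∨ s = -1) → ∃ σ : W ≃ₗ[ℂ] W, σ ∈ lieAutGroup W ∧
      ∀ α : ℤ, σ (L α) = (s : ℂ) • L (s * α)) ∧
    (∀ σ : W ≃ₗ[ℂ] W, σ ∈ lieAutGroup W →
      ∃ (μ : ℂ) (s : ℤ), μ ≠ 0 ∧ (s = 1 ∨ s = -1) ∧
        ∀ α : ℤ, σ (L α) = ((s : ℂ) * μ ^ α) • L (s * α)) ∧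
    Nonempty ((lieAutGroup W) ≃* ℂˣ ⋊[wittAct] ℤˣ) := by
  have hL : IsWittBasis L := hL
  refine ⟨fun μ hμ => ?_, fun s hs => ?_, fun σ hσ => ?_, ?_⟩
  · exact ⟨_, (hL.twistHom ⟨Units.mk0 μ hμ, 1⟩).2, fun α => by simp [hL.twistHom_apply]⟩
  · obtain ⟨s, rfl⟩ := Int.isUnit_iff.2 hs
    exact ⟨_, (hL.twistHom ⟨1, s⟩).2, fun α => by simp [hL.twistHom_apply]⟩
  · exact hL.exists_map_basis_eq (lieEquivOfMemLieAutGroup hσ)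
  · exact ⟨(MulEquiv.ofBijective hL.twistHom ⟨hL.twistHom_injective, hL.twistHom_surjective⟩).symm⟩
end

section
/- Let q₁, q₂ be positive integers and τ : B(q₁) → B(q₂) a Lie algebra isomorphism, where {L_{α,i}} and {L'_{α,i}} denote the standard bases of B(q₁) and B(q₂) respectively. Then there exist μ ∈ ℂ* and s ∈ {±1} such that τ(L_{α,0}) = s q₁ q₂^{-1} μ^α L'_{sα,0} for all α ∈ ℤ. -/
/-!
The image `h = τ L_{0,0}` acts diagonally with eigenvectors `τ L_{α,i}`, and since `τ` is onto
these eigenvectors involve every basis index of `B(q₂)`. Write `L'_{β,j}` as the point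
`(β, j + q₂)` of the upper half plane: the structure constant of two basis vectors vanishes
exactly when their points are parallel. Comparing leading terms of `⁅h, v⁆ = λ v` for suitable
lexicographic weights on `ℤ × ℕ`, a term of `h` of extremal nonzero slope, or a term `L'_{0,j}`
with `j > 0`, would confine all eigenvectors to a half plane that misses some basis index; so
`h = c L'_{0,0}`. Then `ad h` scales `L'_{β,j}` by `c β q₂`, which places `τ L_{α,i}` in column
`s α` for a sign `s`, and `⁅τ L_{α,0}, τ L_{-α,0}⁆ ∈ ℂ h` places `τ L_{α,0}` in row `0`.
Finally the coefficients in `τ L_{α,0} = d_α L'_{sα,0}` satisfy `q₁ d_{α+β} = s q₂ d_α d_β`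
for `α ≠ β`, so `α ↦ s q₂ d_α / q₁` is a character `α ↦ μ^α`.
-/

open Module Finset

lemma Module.Basis.exists_repr_apply_ne_zero_of_surjective {R M N ι ι' : Type*} [Semiring R]
    [Nontrivial R] [AddCommMonoid M] [Module R M] [AddCommMonoid N] [Module R N]
    (b : Basis ι R M) (b' : Basis ι' R N) {f : M →ₗ[R] N} (hf : Function.Surjective f) (i' : ι') :
    ∃ i, b'.repr (f (b i)) i' ≠ 0 := by
  by_contra! h
  have hzero : (b'.coord i').comp f = 0 := b.ext fun i => by simpa using h i
  obtain ⟨x, hx⟩ := hf (b' i')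
  simpa [hx] using LinearMap.congr_fun hzero x

lemma Module.Basis.eq_smul_of_support_repr_subset {R M ι : Type*} [Semiring R] [AddCommMonoid M]
    [Module R M] (b : Basis ι R M) {x : M} {i : ι} (h : (b.repr x).support ⊆ {i}) :
    x = b.repr x i • b i := by
  rw [← b.repr_symm_single, ← Finsupp.support_subset_singleton.1 h, LinearEquiv.symm_apply_apply]

lemma eq_zpow_of_map_add_of_ne_s6 {G : Type*} [DivisionCommMonoid G] {e : ℤ → G} (h0 : e 0 = 1)
    (hadd : ∀ a b, a ≠ b → e (a + b) = e a * e b) (a : ℤ) :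
    e a = e 1 ^ a := by
  have hinv : ∀ a, e a * e (-a) = 1 := fun a => by
    rcases eq_or_ne a 0 with rfl | ha
    · simp [h0]
    · rw [← hadd a (-a) (by omega), add_neg_cancel, h0]
  have htwo : e 2 = e 1 * e 1 := by
    calc e 2 = e (1 + (1 + 3) + -3) := by norm_num
      _ = e 1 * e 1 * (e 3 * e (-3)) := by
        rw [hadd _ _ (by norm_num), hadd 1 _ (by norm_num), hadd 1 3 (by norm_num)]
        ac_rfl
      _ = e 1 * e 1 := by rw [hinv, mul_one]
  have hnat : ∀ n : ℕ, e n = e 1 ^ n := by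
    intro n
    induction n with
    | zero => simpa using h0
    | succ n ih =>
      rcases n with _ | _ | n
      · simp
      · simpa [pow_two] using htwo
      · rw [show ((n + 2 + 1 : ℕ) : ℤ) = 1 + (n + 2 : ℕ) by push_cast; ring,
          hadd _ _ (by omega), ih, ← pow_succ']
  obtain ⟨n, rfl | rfl⟩ := Int.eq_nat_or_neg a
  · rw [hnat, zpow_natCast]
  · rw [eq_inv_of_mul_eq_one_right (hinv n), hnat, zpow_neg, zpow_natCast]

lemma exists_eq_mul_zpow_of_mul_add {K : Type*} [Field K] {s q₁ q₂ : K} (hs : s * s = 1)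
    (hq₁ : q₁ ≠ 0) (hq₂ : q₂ ≠ 0) {d : ℤ → K} (h0 : d 0 * s * q₂ = q₁)
    (hadd : ∀ a b, a ≠ b → q₁ * d (a + b) = s * q₂ * d a * d b) :
    ∃ μ ≠ 0, ∀ α, d α = s * q₁ * q₂⁻¹ * μ ^ α := by
  set e : ℤ → K := fun α => s * q₂ * q₁⁻¹ * d α
  have he₀ : e 0 = 1 := by
    rw [show e 0 = d 0 * s * q₂ * q₁⁻¹ by ring, h0, mul_inv_cancel₀ hq₁]
  have he : ∀ a b, a ≠ b → e (a + b) = e a * e b := fun a b hab => by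
    have hd : d (a + b) = q₁⁻¹ * (s * q₂ * d a * d b) := by
      rw [← hadd a b hab, inv_mul_cancel_left₀ hq₁]
    simp only [e]
    rw [hd]
    ring
  refine ⟨e 1, left_ne_zero_of_mul_eq_one (b := e (-1)) ?_, fun α => ?_⟩
  · rw [← he 1 (-1) (by norm_num), add_neg_cancel, he₀]
  · rw [← eq_zpow_of_map_add_of_ne_s6 he₀ he α]
    calc d α = (s * s) * (q₁ * q₁⁻¹) * (q₂ * q₂⁻¹) * d α := by
          rw [hs, mul_inv_cancel₀ hq₁, mul_inv_cancel₀ hq₂, one_mul, one_mul, one_mul]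
      _ = s * q₁ * q₂⁻¹ * e α := by ring

namespace BlockAlgebra

def structConst (q : ℕ) (x y : ℤ × ℕ) : ℤ := y.1 * (x.2 + q) - x.1 * (y.2 + q)

lemma structConst_zero_left (q : ℕ) (y : ℤ × ℕ) : structConst q 0 y = y.1 * q := by
  simp [structConst]

def lexWeight (a b c d : ℤ) : ℤ × ℕ →+ Lex (ℤ × ℤ) where
  toFun p := toLex (a * p.1 + b * p.2, c * p.1 + d * p.2)
  map_zero' := by simp
  map_add' x y := by
    rw [← toLex_add]
    congr 1
    simp only [Prod.fst_add, Prod.snd_add, Nat.cast_add, Prod.mk_add_mk]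
    congr 1 <;> ring

lemma lexWeight_apply (a b c d : ℤ) (p : ℤ × ℕ) :
    lexWeight a b c d p = toLex (a * p.1 + b * p.2, c * p.1 + d * p.2) := rfl

lemma lexWeight_injective {a b c d : ℤ} (h : a * d - b * c ≠ 0) :
    Function.Injective (lexWeight a b c d) := by
  intro x y hxy
  simp only [lexWeight_apply, toLex_inj, Prod.mk.injEq] at hxy
  obtain ⟨h₁, h₂⟩ := hxy
  have e₁ : (a * d - b * c) * (x.1 - y.1) = 0 := by linear_combination d * h₁ - b * h₂
  have e₂ : (a * d - b * c) * ((x.2 : ℤ) - y.2) = 0 := by linear_combination a * h₂ - c * h₁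
  refine Prod.ext ?_ ?_
  · linarith [(mul_eq_zero.1 e₁).resolve_left h]
  · exact_mod_cast sub_eq_zero.1 ((mul_eq_zero.1 e₂).resolve_left h)

/-- The first coordinate `ε (structConst q x₀ p + x₀.1 q)` compares the `ε`-slope
`ε p.1 / (p.2 + q)` of `p` with that of `x₀`. -/
def slopeWeight (q : ℕ) (ε : ℤ) (x₀ : ℤ × ℕ) : ℤ × ℕ →+ Lex (ℤ × ℤ) :=
  lexWeight (ε * (x₀.2 + q)) (-(ε * x₀.1)) ε 0

lemma exists_isMax_slopeWeight {q : ℕ} (hq : 0 < q) {S : Finset (ℤ × ℕ)} {ε : ℤ} {p₀ : ℤ × ℕ}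
    (hp₀ : p₀ ∈ S) (hpos : 0 < ε * p₀.1) :
    ∃ x₀ ∈ S, 0 < ε * x₀.1 ∧ ∀ p ∈ S, slopeWeight q ε x₀ p ≤ slopeWeight q ε x₀ x₀ := by
  have hden : ∀ p : ℤ × ℕ, (0 : ℚ) < ((p.2 : ℤ) + q : ℤ) := fun p => by
    have : (0 : ℤ) ≤ p.2 := Int.natCast_nonneg _
    exact_mod_cast (by omega : (0 : ℤ) < (p.2 : ℤ) + q)
  obtain ⟨x₀, hx₀, hmax⟩ := S.exists_max_image
    (fun p => toLex (((ε * p.1 : ℤ) : ℚ) / ((p.2 : ℤ) + q : ℤ), ε * p.1)) ⟨p₀, hp₀⟩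
  have hslope : ∀ p ∈ S,
      ε * p.1 * ((x₀.2 : ℤ) + q) < ε * x₀.1 * ((p.2 : ℤ) + q) ∨
      ε * p.1 * ((x₀.2 : ℤ) + q) = ε * x₀.1 * ((p.2 : ℤ) + q) ∧ ε * p.1 ≤ ε * x₀.1 := by
    intro p hp
    rcases Prod.Lex.toLex_le_toLex.1 (hmax p hp) with hlt | ⟨heq, hle⟩
    · left
      rw [div_lt_div_iff₀ (hden p) (hden x₀)] at hlt
      exact_mod_cast hlt
    · right
      rw [div_eq_div_iff (hden p).ne' (hden x₀).ne'] at heq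
      exact ⟨by exact_mod_cast heq, hle⟩
  refine ⟨x₀, hx₀, ?_, fun p hp => ?_⟩
  · rcases hslope p₀ hp₀ with h' | ⟨h', -⟩ <;>
      nlinarith [Int.natCast_nonneg p₀.2, Int.natCast_nonneg x₀.2]
  · simp only [slopeWeight, lexWeight_apply, Prod.Lex.toLex_le_toLex]
    rcases hslope p hp with hlt | ⟨heq, hle⟩
    · left; linarith
    · right; constructor <;> linarith

section Basis

variable {R B : Type*} [CommRing R] [LieRing B] [LieAlgebra R B]

def IsBlockBasis (q : ℕ) (b : Basis (ℤ × ℕ) R B) : Prop :=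
  ∀ x y, ⁅b x, b y⁆ = (structConst q x y : R) • b (x + y)

variable {q : ℕ} {b : Basis (ℤ × ℕ) R B}

lemma isBlockBasis_of_forall
    (h : ∀ (α β : ℤ) (i j : ℕ), ⁅b (α, i), b (β, j)⁆ =
      (((β * ((i : ℤ) + q) - α * ((j : ℤ) + q)) : ℤ) : R) • b (α + β, i + j)) :
    IsBlockBasis q b :=
  fun x y => h x.1 y.1 x.2 y.2

namespace IsBlockBasis

variable (hb : IsBlockBasis q b)
include hb

lemma repr_lie_apply (u v : B) (P : ℤ × ℕ) :
    b.repr ⁅u, v⁆ P = ∑ x ∈ (b.repr u).support, ∑ y ∈ (b.repr v).support,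
      if x + y = P then b.repr u x * b.repr v y * structConst q x y else 0 := by
  conv_lhs => rw [← b.linearCombination_repr u, ← b.linearCombination_repr v]
  rw [Finsupp.linearCombination_apply, Finsupp.linearCombination_apply, Finsupp.sum, Finsupp.sum,
    sum_lie, map_sum, Finsupp.finsetSum_apply]
  refine sum_congr rfl fun x _ => ?_
  rw [lie_sum, map_sum, Finsupp.finsetSum_apply]
  refine sum_congr rfl fun y _ => ?_
  rw [smul_lie, lie_smul, hb, smul_smul, smul_smul, map_smul, b.repr_self, Finsupp.smul_apply,
    Finsupp.single_apply, smul_eq_mul]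
  split_ifs <;> ring

lemma repr_lie_basis_zero (v : B) (P : ℤ × ℕ) :
    b.repr ⁅b 0, v⁆ P = (P.1 * q : ℤ) * b.repr v P := by
  let f : B →ₗ[R] R := (b.coord P).comp ((LieModule.toEnd R B B) (b 0))
  let g : B →ₗ[R] R := ((P.1 * q : ℤ) : R) • b.coord P
  suffices f = g from LinearMap.congr_fun this v
  refine b.ext fun y => ?_
  simp only [f, g, LinearMap.comp_apply, LieModule.toEnd_apply_apply, hb 0 y, zero_add,
    LinearMap.smul_apply, Basis.coord_apply, map_smul, b.repr_self, structConst_zero_left,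
    smul_eq_mul]
  rcases eq_or_ne y P with rfl | hyP
  · rfl
  · simp [hyP]

variable {M : Type*} [AddCommMonoid M] [LinearOrder M] [IsOrderedCancelAddMonoid M]
  {φ : ℤ × ℕ →+ M} {u v : B} {x₀ y₀ : ℤ × ℕ}

lemma repr_lie_add_of_isMax (hφ : Function.Injective φ)
    (hx₀ : x₀ ∈ (b.repr u).support) (hy₀ : y₀ ∈ (b.repr v).support)
    (hu : ∀ x ∈ (b.repr u).support, φ x ≤ φ x₀) (hv : ∀ y ∈ (b.repr v).support, φ y ≤ φ y₀) :
    b.repr ⁅u, v⁆ (x₀ + y₀) = b.repr u x₀ * b.repr v y₀ * structConst q x₀ y₀ := by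
  have key : ∀ x ∈ (b.repr u).support, ∀ y ∈ (b.repr v).support,
      x + y = x₀ + y₀ → x = x₀ ∧ y = y₀ := by
    intro x hx y hy hxy
    have := (add_eq_add_iff_eq_and_eq (hu x hx) (hv y hy)).1 (by rw [← map_add, ← map_add, hxy])
    exact ⟨hφ this.1, hφ this.2⟩
  rw [hb.repr_lie_apply, sum_eq_single_of_mem x₀ hx₀, sum_eq_single_of_mem y₀ hy₀, if_pos rfl]
  · exact fun y hy hne => if_neg fun h => hne (key _ hx₀ _ hy h).2
  · exact fun x hx hne => sum_eq_zero fun y hy => if_neg fun h => hne (key _ hx _ hy h).1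

variable [IsDomain R]

lemma eigenvalue_eq_of_lie_smul_basis_zero {c c' : R} {v : B} (hv : ⁅c • b 0, v⁆ = c' • v)
    {P : ℤ × ℕ} (hP : P ∈ (b.repr v).support) :
    c' = c * (P.1 * q : ℤ) := by
  have h := congrArg (fun w => b.repr w P) hv
  simp only [smul_lie, map_smul, Finsupp.smul_apply, hb.repr_lie_basis_zero, smul_eq_mul] at h
  exact mul_right_cancel₀ (Finsupp.mem_support_iff.1 hP) (by rw [← h, mul_assoc])

variable [CharZero R]

/-- If `v` is an eigenvector of `ad u`, a leading index of `u` of positive weight forces the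
structure constant with the leading index of `v` to vanish: otherwise `⁅u, v⁆` would have a
nonzero coefficient beyond the leading index of `v`. -/
lemma structConst_eq_zero_of_lie_eq_smul (hφ : Function.Injective φ)
    {c : R} (huv : ⁅u, v⁆ = c • v)
    (hx₀ : x₀ ∈ (b.repr u).support) (hy₀ : y₀ ∈ (b.repr v).support)
    (hu : ∀ x ∈ (b.repr u).support, φ x ≤ φ x₀) (hv : ∀ y ∈ (b.repr v).support, φ y ≤ φ y₀)
    (hpos : 0 < φ x₀) :
    structConst q x₀ y₀ = 0 := by
  have hout : b.repr v (x₀ + y₀) = 0 := by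
    refine Finsupp.notMem_support_iff.1 fun hmem => (hv _ hmem).not_gt ?_
    rw [map_add]
    exact lt_add_of_pos_left _ hpos
  have h := hb.repr_lie_add_of_isMax hφ hx₀ hy₀ hu hv
  rw [huv, map_smul, Finsupp.smul_apply, hout, smul_zero, eq_comm] at h
  simpa [Finsupp.mem_support_iff.1 hx₀, Finsupp.mem_support_iff.1 hy₀] using h

lemma mul_fst_nonpos_of_forall_eigenvector (hq : 0 < q) {h : B}
    (hcov : ∀ P, ∃ v, ∃ c : R, ⁅h, v⁆ = c • v ∧ b.repr v P ≠ 0) (ε : ℤ) :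
    ∀ p ∈ (b.repr h).support, ε * p.1 ≤ 0 := by
  by_contra! ⟨p₀, hp₀, hpos₀⟩
  obtain ⟨x₀, hx₀, hx₀pos, hmax⟩ := exists_isMax_slopeWeight hq hp₀ hpos₀
  have hε : ε ≠ 0 := by rintro rfl; simp at hx₀pos
  have hφ : Function.Injective (slopeWeight q ε x₀) := lexWeight_injective (by
    have := mul_ne_zero hε hx₀pos.ne'
    contrapose! this
    linear_combination this)
  have hφpos : 0 < slopeWeight q ε x₀ x₀ := by
    change toLex ((0 : ℤ), (0 : ℤ)) < _
    simp only [slopeWeight, lexWeight_apply, Prod.Lex.toLex_lt_toLex]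
    left; nlinarith
  -- an index beyond the steepest slope of `h` still occurs in some eigenvector
  obtain ⟨v, c, hv, hP⟩ := hcov (ε * (ε * x₀.1 + 1), 0)
  obtain ⟨y₀, hy₀, hvmax⟩ := (b.repr v).support.exists_max_image (slopeWeight q ε x₀)
    ⟨_, Finsupp.mem_support_iff.2 hP⟩
  have hsc := hb.structConst_eq_zero_of_lie_eq_smul hφ hv hx₀ hy₀ hmax hvmax hφpos
  have hle := hvmax _ (Finsupp.mem_support_iff.2 hP)
  simp only [slopeWeight, lexWeight_apply, Prod.Lex.toLex_le_toLex] at hle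
  have hle' : ε * (x₀.2 + q) * (ε * (ε * x₀.1 + 1)) ≤ ε * (x₀.2 + q) * y₀.1 - ε * x₀.1 * y₀.2 := by
    rcases hle with h' | ⟨h', -⟩ <;> push_cast at h' <;> linarith
  have hw : ε * (x₀.2 + q) * y₀.1 - ε * x₀.1 * y₀.2 = ε * x₀.1 * q := by
    simp only [structConst] at hsc
    linear_combination ε * hsc
  have hεε : 1 ≤ ε * ε := by nlinarith [mul_self_pos.2 hε]
  have hgrow : (ε * x₀.1 + 1) * (x₀.2 + q) ≤ ε * ε * ((ε * x₀.1 + 1) * (x₀.2 + q)) :=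
    le_mul_of_one_le_left (by positivity) hεε
  nlinarith [Int.natCast_nonneg x₀.2]

lemma snd_eq_zero_of_forall_eigenvector {h : B}
    (hcov : ∀ P, ∃ v, ∃ c : R, ⁅h, v⁆ = c • v ∧ b.repr v P ≠ 0)
    (hcol : ∀ p ∈ (b.repr h).support, p.1 = 0) :
    ∀ p ∈ (b.repr h).support, p.2 = 0 := by
  by_contra! ⟨p₀, hp₀, hne⟩
  set φ := lexWeight 1 0 0 1
  have hφ : Function.Injective φ := lexWeight_injective (by norm_num)
  obtain ⟨x₀, hx₀, hmax⟩ := (b.repr h).support.exists_max_image φ ⟨p₀, hp₀⟩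
  have hx₀pos : 0 < x₀.2 := by
    have := hmax p₀ hp₀
    simp only [φ, lexWeight_apply, Prod.Lex.toLex_le_toLex, hcol p₀ hp₀, hcol x₀ hx₀] at this
    omega
  have hφpos : 0 < φ x₀ := by
    change toLex ((0 : ℤ), (0 : ℤ)) < _
    simp only [φ, lexWeight_apply, Prod.Lex.toLex_lt_toLex, hcol x₀ hx₀]
    right; constructor <;> omega
  obtain ⟨v, c, hv, hP⟩ := hcov (1, 0)
  obtain ⟨y₀, hy₀, hvmax⟩ := (b.repr v).support.exists_max_image φ
    ⟨_, Finsupp.mem_support_iff.2 hP⟩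
  have hsc := hb.structConst_eq_zero_of_lie_eq_smul hφ hv hx₀ hy₀ hmax hvmax hφpos
  have hle := hvmax _ (Finsupp.mem_support_iff.2 hP)
  simp only [φ, lexWeight_apply, Prod.Lex.toLex_le_toLex] at hle
  simp only [structConst, hcol x₀ hx₀] at hsc
  have hy₀pos : 0 < y₀.1 := by omega
  nlinarith

lemma eq_smul_basis_zero_of_forall_eigenvector (hq : 0 < q) {h : B}
    (hcov : ∀ P, ∃ v, ∃ c : R, ⁅h, v⁆ = c • v ∧ b.repr v P ≠ 0) :
    h = b.repr h 0 • b 0 := by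
  have hcol : ∀ p ∈ (b.repr h).support, p.1 = 0 := fun p hp => by
    have := hb.mul_fst_nonpos_of_forall_eigenvector hq hcov 1 p hp
    have := hb.mul_fst_nonpos_of_forall_eigenvector hq hcov (-1) p hp
    omega
  exact b.eq_smul_of_support_repr_subset fun p hp =>
    mem_singleton.2 (Prod.ext (hcol p hp) (hb.snd_eq_zero_of_forall_eigenvector hcov hcol p hp))

lemma snd_eq_zero_of_lie {a : ℤ} (ha : a ≠ 0) {X Y : B} (hY : Y ≠ 0)
    (hXcol : ∀ p ∈ (b.repr X).support, p.1 = a) (hYcol : ∀ p ∈ (b.repr Y).support, p.1 = -a)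
    (hXY : ∀ p ∈ (b.repr ⁅X, Y⁆).support, p.2 = 0) :
    ∀ p ∈ (b.repr X).support, p.2 = 0 := by
  intro p hp
  by_contra hp₂
  set φ := lexWeight 0 1 1 0
  have hφ : Function.Injective φ := lexWeight_injective (by norm_num)
  obtain ⟨x₀, hx₀, hXmax⟩ := (b.repr X).support.exists_max_image φ ⟨p, hp⟩
  obtain ⟨y₀, hy₀, hYmax⟩ := (b.repr Y).support.exists_max_image φ
    (Finsupp.support_nonempty_iff.2 ((LinearEquiv.map_ne_zero_iff b.repr).2 hY))
  have hx₀pos : 0 < x₀.2 := by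
    have := hXmax p hp
    simp only [φ, lexWeight_apply, Prod.Lex.toLex_le_toLex] at this
    omega
  have hsc : structConst q x₀ y₀ ≠ 0 := by
    have hsc' : structConst q x₀ y₀ = -a * (x₀.2 + y₀.2 + 2 * q) := by
      simp only [structConst, hXcol x₀ hx₀, hYcol y₀ hy₀]; ring
    rw [hsc']
    exact mul_ne_zero (neg_ne_zero.2 ha) (by omega)
  have hmem : x₀ + y₀ ∈ (b.repr ⁅X, Y⁆).support := by
    rw [Finsupp.mem_support_iff, hb.repr_lie_add_of_isMax hφ hx₀ hy₀ hXmax hYmax]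
    exact mul_ne_zero (mul_ne_zero (Finsupp.mem_support_iff.1 hx₀) (Finsupp.mem_support_iff.1 hy₀))
      (Int.cast_ne_zero.2 hsc)
  have := hXY _ hmem
  simp only [Prod.snd_add] at this
  omega

end IsBlockBasis

end Basis

section Iso

variable {R B₁ B₂ : Type*} [CommRing R]
  [LieRing B₁] [LieAlgebra R B₁] [LieRing B₂] [LieAlgebra R B₂]
  {q₁ q₂ : ℕ} {L : Basis (ℤ × ℕ) R B₁} {L' : Basis (ℤ × ℕ) R B₂} (τ : B₁ ≃ₗ⁅R⁆ B₂)

lemma lie_map_basis_zero (hL : IsBlockBasis q₁ L) (p : ℤ × ℕ) :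
    ⁅τ (L 0), τ (L p)⁆ = ((p.1 * q₁ : ℤ) : R) • τ (L p) := by
  rw [← τ.map_lie, hL, zero_add, structConst_zero_left, map_smul]

variable [IsDomain R] [CharZero R]

lemma exists_map_basis_zero_eq_smul (hq₂ : 0 < q₂) (hL : IsBlockBasis q₁ L)
    (hL' : IsBlockBasis q₂ L') :
    ∃ c : R, τ (L 0) = c • L' 0 := by
  refine ⟨_, hL'.eq_smul_basis_zero_of_forall_eigenvector hq₂ fun P => ?_⟩
  obtain ⟨p, hp⟩ := L.exists_repr_apply_ne_zero_of_surjective L'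
    (f := τ.toLinearEquiv.toLinearMap) τ.toLinearEquiv.surjective P
  exact ⟨_, _, lie_map_basis_zero τ hL p, hp⟩

lemma exists_sign_forall_fst_eq_mul (hq₁ : 0 < q₁) (hL : IsBlockBasis q₁ L)
    (hL' : IsBlockBasis q₂ L') {c : R} (hc : τ (L 0) = c • L' 0) :
    ∃ s : ℤ, (s = 1 ∨ s = -1) ∧ c * s * q₂ = q₁ ∧
      ∀ p, ∀ P ∈ (L'.repr (τ (L p))).support, P.1 = s * p.1 := by
  have heig : ∀ p, ∀ P ∈ (L'.repr (τ (L p))).support, ((p.1 * q₁ : ℤ) : R) = c * (P.1 * q₂ : ℤ) :=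
    fun p P hP => hL'.eigenvalue_eq_of_lie_smul_basis_zero (hc ▸ lie_map_basis_zero τ hL p) hP
  obtain ⟨P₁, hP₁⟩ : (L'.repr (τ (L (1, 0)))).support.Nonempty := by
    simpa using L.ne_zero (1, 0)
  have hcs : c * P₁.1 * q₂ = q₁ := by
    have := heig _ P₁ hP₁
    push_cast at this
    linear_combination -this
  have hcq : c * q₂ ≠ 0 := by
    have : (q₁ : R) ≠ 0 := by exact_mod_cast hq₁.ne'
    rw [← hcs] at this
    contrapose! this
    linear_combination P₁.1 * this
  have hcol : ∀ p, ∀ P ∈ (L'.repr (τ (L p))).support, P.1 = P₁.1 * p.1 := by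
    intro p P hP
    have := heig p P hP
    push_cast at this
    have h' : ((P.1 : ℤ) : R) = ((P₁.1 * p.1 : ℤ) : R) :=
      mul_left_cancel₀ hcq (by push_cast; linear_combination -this - p.1 * hcs)
    exact_mod_cast h'
  refine ⟨P₁.1, ?_, hcs, hcol⟩
  obtain ⟨p, hp⟩ := L.exists_repr_apply_ne_zero_of_surjective L'
    (f := τ.toLinearEquiv.toLinearMap) τ.toLinearEquiv.surjective (1, 0)
  exact Int.eq_one_or_neg_one_of_mul_eq_one (hcol p _ (Finsupp.mem_support_iff.2 hp)).symm

lemma map_basis_eq_smul (hL : IsBlockBasis q₁ L) (hL' : IsBlockBasis q₂ L') {c : R}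
    (hc : τ (L 0) = c • L' 0) {s : ℤ} (hs : s ≠ 0)
    (hcol : ∀ p, ∀ P ∈ (L'.repr (τ (L p))).support, P.1 = s * p.1) (α : ℤ) :
    τ (L (α, 0)) = L'.repr (τ (L (α, 0))) (s * α, 0) • L' (s * α, 0) := by
  have hzero : ∀ c' : R, (L'.repr (c' • τ (L 0))).support ⊆ {0} := fun c' => by
    rw [hc, smul_smul, map_smul, L'.repr_self, Finsupp.smul_single, smul_eq_mul, mul_one]
    exact Finsupp.support_single_subset
  refine L'.eq_smul_of_support_repr_subset fun P hP => ?_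
  rcases eq_or_ne α 0 with rfl | hα
  · have h0 : P ∈ (L'.repr ((1 : R) • τ (L 0))).support := by rwa [one_smul, ← Prod.mk_zero_zero]
    rw [mem_singleton.1 (hzero 1 h0), mul_zero, Prod.mk_zero_zero, mem_singleton]
  have hXY : ⁅τ (L (α, 0)), τ (L (-α, 0))⁆ =
      ((structConst q₁ (α, 0) (-α, 0) : ℤ) : R) • τ (L 0) := by
    rw [← τ.map_lie, hL, Prod.mk_add_mk, add_neg_cancel, add_zero, Prod.mk_zero_zero, map_smul]
  have hrow := hL'.snd_eq_zero_of_lie (X := τ (L (α, 0))) (Y := τ (L (-α, 0)))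
    (mul_ne_zero hs hα) (by simpa using L.ne_zero (-α, 0))
    (hcol _) (fun P hP => by rw [hcol _ P hP]; ring)
    (fun Q hQ => by rw [hXY] at hQ; rw [mem_singleton.1 (hzero _ hQ)]; rfl) P hP
  exact mem_singleton.2 (Prod.ext (hcol _ P hP) hrow)

lemma mul_coeff_add_eq_of_ne (hL : IsBlockBasis q₁ L) (hL' : IsBlockBasis q₂ L') {s : ℤ}
    {d : ℤ → R} (hd : ∀ α, τ (L (α, 0)) = d α • L' (s * α, 0)) {a b : ℤ} (hab : a ≠ b) :
    q₁ * d (a + b) = s * q₂ * d a * d b := by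
  have h := congrArg (fun x => L'.repr x (s * (a + b), 0)) (τ.map_lie (L (a, 0)) (L (b, 0)))
  simp only [hL _ _, hd, map_smul, smul_lie, lie_smul, hL' _ _, Prod.mk_add_mk, add_zero, ← mul_add,
    L'.repr_self, Finsupp.smul_apply, Finsupp.single_eq_same, smul_eq_mul, mul_one,
    structConst] at h
  push_cast at h
  have hba : (b : R) - a ≠ 0 := sub_ne_zero.2 (by exact_mod_cast hab.symm)
  exact mul_left_cancel₀ hba (by linear_combination h)

end Iso

end BlockAlgebra

open BlockAlgebra

/-- Let `τ : B(q₁) → B(q₂)` be an isomorphism of the Block type Lie algebras with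
standard bases `{L_{α,i}}` and `{L'_{α,i}}`.  Then there exist `μ ∈ ℂ*` and `s ∈ {±1}`
such that `τ(L_{α,0}) = s q₁ q₂⁻¹ μ^α L'_{sα,0}` for all `α ∈ ℤ`. -/
theorem block_iso_on_degree_zero (q₁ q₂ : ℕ) (hq₁ : 0 < q₁) (hq₂ : 0 < q₂)
    {B₁ : Type} [LieRing B₁] [LieAlgebra ℂ B₁]
    {B₂ : Type} [LieRing B₂] [LieAlgebra ℂ B₂]
    (L : Module.Basis (ℤ × ℕ) ℂ B₁) (L' : Module.Basis (ℤ × ℕ) ℂ B₂)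
    (hL : ∀ (α β : ℤ) (i j : ℕ),
      ⁅L (α, i), L (β, j)⁆ =
        (((β * ((i : ℤ) + q₁) - α * ((j : ℤ) + q₁)) : ℤ) : ℂ) • L (α + β, i + j))
    (hL' : ∀ (α β : ℤ) (i j : ℕ),
      ⁅L' (α, i), L' (β, j)⁆ =
        (((β * ((i : ℤ) + q₂) - α * ((j : ℤ) + q₂)) : ℤ) : ℂ) • L' (α + β, i + j))
    (τ : B₁ ≃ₗ⁅ℂ⁆ B₂) :
    ∃ (μ : ℂ) (s : ℤ), μ ≠ 0 ∧ (s = 1 ∨ s = -1) ∧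
      ∀ α : ℤ, τ (L (α, 0)) = ((s : ℂ) * q₁ * (q₂ : ℂ)⁻¹ * μ ^ α) • L' (s * α, 0) := by
  have hb₁ := isBlockBasis_of_forall hL
  have hb₂ := isBlockBasis_of_forall hL'
  obtain ⟨c, hc⟩ := exists_map_basis_zero_eq_smul τ hq₂ hb₁ hb₂
  obtain ⟨s, hs, hcs, hcol⟩ := exists_sign_forall_fst_eq_mul τ hq₁ hb₁ hb₂ hc
  have hss : (s : ℂ) * s = 1 := by rcases hs with rfl | rfl <;> norm_num
  set d : ℤ → ℂ := fun α => L'.repr (τ (L (α, 0))) (s * α, 0)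
  have hd : ∀ α, τ (L (α, 0)) = d α • L' (s * α, 0) :=
    map_basis_eq_smul τ hb₁ hb₂ hc (by rintro rfl; simp at hss) hcol
  have hd₀ : d 0 = c := by
    simp only [d, mul_zero, Prod.mk_zero_zero, hc, map_smul, L'.repr_self, Finsupp.smul_apply,
      Finsupp.single_eq_same, smul_eq_mul, mul_one]
  obtain ⟨μ, hμ, hdμ⟩ := exists_eq_mul_zpow_of_mul_add hss (by exact_mod_cast hq₁.ne')
    (by exact_mod_cast hq₂.ne') (hd₀ ▸ hcs) fun _ _ hab => mul_coeff_add_eq_of_ne τ hb₁ hb₂ hd hab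
  exact ⟨μ, s, hμ, hs, fun α => by rw [hd α, hdμ α]⟩
end

section
/- The linear map D₀ : B(q) → B(q) determined by D₀(L_{β,j}) = j L_{β,j} for all β ∈ ℤ, j ∈ ℤ_{≥0} is a derivation of B(q), and it is not an inner derivation (i.e., D₀ ≠ ad_u for every u ∈ B(q)). -/
/-!
Both claims reduce to basis elements. `D₀` multiplies `L_{α,i}` by its second index `i`, and
the bracket adds second indices, so the Leibniz rule holds on basis pairs and hence everywhere.
For `D₀ ≠ ad_u`: by the structure constants, `⁅L_{α,i}, L_{0,1}⁆` has no `L_{0,1}`-component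
(it would force `α = 0`, and then the coefficient `0·(i+q) - α·(1+q)` vanishes), so by linearity
neither has `⁅u, L_{0,1}⁆`; but `D₀ L_{0,1} = L_{0,1}`.
-/

namespace Module.Basis

variable {R L ι : Type*} [CommRing R] [LieRing L] [LieAlgebra R L]

theorem leibniz_of_basis (b : Basis ι R L) (D : L →ₗ[R] L)
    (h : ∀ i j, D ⁅b i, b j⁆ = ⁅D (b i), b j⁆ + ⁅b i, D (b j)⁆) (x y : L) :
    D ⁅x, y⁆ = ⁅D x, y⁆ + ⁅x, D y⁆ := by
  let bracket : L →ₗ[R] L →ₗ[R] L := LieModule.toEnd R L L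
  have key : bracket.compr₂ D = bracket ∘ₗ D + bracket.compl₂ D :=
    LinearMap.ext_basis b b fun i j => by simpa [bracket] using h i j
  simpa [bracket] using LinearMap.congr_fun (LinearMap.congr_fun key x) y

theorem coord_lie_eq_zero_of_basis (b : Basis ι R L) {y : L} {k : ι}
    (h : ∀ i, b.coord k ⁅b i, y⁆ = 0) (x : L) : b.coord k ⁅x, y⁆ = 0 := by
  have key : b.coord k ∘ₗ (LieModule.toEnd R L L : L →ₗ[R] L →ₗ[R] L).flip y = 0 :=
    b.ext fun i => by simpa using h i
  simpa using LinearMap.congr_fun key x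

end Module.Basis

theorem block_D0_outer_derivation_general (q : ℕ)
    {B : Type} [LieRing B] [LieAlgebra ℂ B]
    (L : Module.Basis (ℤ × ℕ) ℂ B)
    (hL : ∀ (α β : ℤ) (i j : ℕ),
      ⁅L (α, i), L (β, j)⁆ =
        (((β * ((i : ℤ) + q) - α * ((j : ℤ) + q)) : ℤ) : ℂ) • L (α + β, i + j))
    (D₀ : B →ₗ[ℂ] B)
    (hD₀ : ∀ (β : ℤ) (j : ℕ), D₀ (L (β, j)) = (j : ℂ) • L (β, j)) :
    (∀ x y : B, D₀ ⁅x, y⁆ = ⁅D₀ x, y⁆ + ⁅x, D₀ y⁆) ∧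
    (∀ u : B, D₀ ≠ (LieAlgebra.ad ℂ B u : B →ₗ[ℂ] B)) := by
  refine ⟨L.leibniz_of_basis D₀ fun ⟨α, i⟩ ⟨β, j⟩ => ?_, fun u hu => ?_⟩
  · simp only [hL, hD₀, map_smul, smul_lie, lie_smul, smul_smul, ← add_smul]
    push_cast
    congr 1
    ring
  · have no_component : ∀ p, L.coord (0, 1) ⁅L p, L (0, 1)⁆ = 0 := by
      rintro ⟨α, i⟩
      rw [hL, map_smul, L.coord_apply, L.repr_self, Finsupp.single_apply]
      split_ifs with hp
      · obtain rfl : α = 0 := by simpa using congrArg Prod.fst hp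
        simp
      · simp
    have component_one : L.coord (0, 1) ⁅u, L (0, 1)⁆ = 1 := by
      have ad_eq : ⁅u, L (0, 1)⁆ = D₀ (L (0, 1)) := by rw [hu]; rfl
      simp [ad_eq, hD₀]
    simpa [component_one] using L.coord_lie_eq_zero_of_basis no_component u

/-- The linear map `D₀` on the Block type Lie algebra `B(q)` determined by
`D₀(L_{β,j}) = j L_{β,j}` is a derivation of `B(q)` and it is not an inner derivation,
i.e. `D₀ ≠ ad_u` for every `u ∈ B(q)`. -/
theorem block_D0_outer_derivation (q : ℕ) (hq : 0 < q)
    {B : Type} [LieRing B] [LieAlgebra ℂ B]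
    (L : Module.Basis (ℤ × ℕ) ℂ B)
    (hL : ∀ (α β : ℤ) (i j : ℕ),
      ⁅L (α, i), L (β, j)⁆ =
        (((β * ((i : ℤ) + q) - α * ((j : ℤ) + q)) : ℤ) : ℂ) • L (α + β, i + j))
    (D₀ : B →ₗ[ℂ] B)
    (hD₀ : ∀ (β : ℤ) (j : ℕ), D₀ (L (β, j)) = (j : ℂ) • L (β, j)) :
    (∀ x y : B, D₀ ⁅x, y⁆ = ⁅D₀ x, y⁆ + ⁅x, D₀ y⁆) ∧
    (∀ u : B, D₀ ≠ (LieAlgebra.ad ℂ B u : B →ₗ[ℂ] B)) :=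
  block_D0_outer_derivation_general q L hL D₀ hD₀
end

section
/- Let α ∈ ℤ and let d be a nonzero derivation of B(q) of degree α. Suppose i ∈ ℤ is the minimal integer such that d(B^{[j]}) ⊆ B^{[i+j]} for all j ∈ ℤ_{≥0}. Then i ≥ 0. -/
variable {B : Type} [LieRing B] [LieAlgebra ℂ B]

/-- The homogeneous component `B_α = span{L_{α,i} : i ∈ ℤ_{≥0}}` of the grading of the
Block type Lie algebra. -/
def blockGrade (L : Module.Basis (ℤ × ℕ) ℂ B) (α : ℤ) : Submodule ℂ B :=
  Submodule.span ℂ (Set.range fun i : ℕ => L (α, i))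

/-- The subspace `B^{[j]} = span{L_{β,k} : β ∈ ℤ, 0 ≤ k ≤ j}` (which is `0` for
`j < 0`). -/
def blockFilt (L : Module.Basis (ℤ × ℕ) ℂ B) (j : ℤ) : Submodule ℂ B :=
  Submodule.span ℂ {x | ∃ (β : ℤ) (k : ℕ), (k : ℤ) ≤ j ∧ x = L (β, k)}

/-- A linear map `d` has degree `α` if `d ≠ 0` and `d(B_β) ⊆ B_{α+β}` for all `β`. -/
def HasDegree (L : Module.Basis (ℤ × ℕ) ℂ B) (d : B →ₗ[ℂ] B) (α : ℤ) : Prop :=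
  d ≠ 0 ∧ ∀ β : ℤ, (blockGrade L β).map d ≤ blockGrade L (α + β)

/-!
If the minimal shift `i` were negative, `d` would kill `B^{[0]} = span{L_{β,0}}`, so the
derivation `d` would commute with every `ad L_{β,0}`. Commuting with `ad L_{0,0}`, which acts
on `L_{γ,k}` by `γq`, forces `d` to preserve the `ℤ`-grading; commuting with `ad L_{±1,0}` then
forces every coefficient of `d L_{γ,k}` on `L_{γ,m}` with `m < k` to vanish. As `i < 0`, these
are the only coefficients `d L_{γ,k}` can have, hence `d = 0`.
-/

def IsBlockBasis (q : ℕ) (L : Module.Basis (ℤ × ℕ) ℂ B) : Prop :=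
  ∀ (α β : ℤ) (i j : ℕ),
    ⁅L (α, i), L (β, j)⁆ = (((β * ((i : ℤ) + q) - α * ((j : ℤ) + q)) : ℤ) : ℂ) • L (α + β, i + j)

lemma repr_eq_zero_of_mem_blockFilt (L : Module.Basis (ℤ × ℕ) ℂ B) {j : ℤ} {x : B}
    (hx : x ∈ blockFilt L j) {p : ℤ × ℕ} (hp : j < p.2) : L.repr x p = 0 := by
  have hspan : blockFilt L j = Submodule.span ℂ (L '' {p : ℤ × ℕ | (p.2 : ℤ) ≤ j}) := by
    unfold blockFilt
    congr 1
    ext x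
    constructor
    · rintro ⟨β, k, hk, rfl⟩
      exact ⟨(β, k), hk, rfl⟩
    · rintro ⟨⟨β, k⟩, hk, rfl⟩
      exact ⟨β, k, hk, rfl⟩
  rw [hspan, Module.Basis.mem_span_image] at hx
  exact Finsupp.notMem_support_iff.mp fun hmem => not_le.mpr hp (hx hmem)

namespace IsBlockBasis

variable {q : ℕ} {L : Module.Basis (ℤ × ℕ) ℂ B}

lemma repr_lie_basis_zero_left (hL : IsBlockBasis q L) (β γ : ℤ) (m : ℕ) (y : B) :
    L.repr ⁅L (β, 0), y⁆ (β + γ, m) = ((γ * q - β * ((m : ℤ) + q) : ℤ) : ℂ) * L.repr y (γ, m) := by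
  have hcoord : Finsupp.lapply (β + γ, m) ∘ₗ (L.repr : B →ₗ[ℂ] (ℤ × ℕ →₀ ℂ)) ∘ₗ
        LieAlgebra.ad ℂ B (L (β, 0)) =
      ((γ * q - β * ((m : ℤ) + q) : ℤ) : ℂ) •
        (Finsupp.lapply (γ, m) ∘ₗ (L.repr : B →ₗ[ℂ] (ℤ × ℕ →₀ ℂ))) := by
    refine L.ext fun ⟨ε, n⟩ => ?_
    simp only [LinearMap.comp_apply, LinearMap.smul_apply, Finsupp.lapply_apply,
      LieAlgebra.ad_apply, LinearEquiv.coe_coe, hL β ε 0 n, map_smul, Module.Basis.repr_self,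
      Finsupp.single_apply, Prod.mk.injEq, add_right_inj, zero_add, smul_eq_mul]
    by_cases hε : ε = γ
    · by_cases hn : n = m
      · subst hε hn
        simp
      · simp [hn]
    · simp [hε]
  simpa using LinearMap.congr_fun hcoord y

lemma repr_apply_basis_of_commute (hL : IsBlockBasis q L) {d : B →ₗ[ℂ] B}
    (hcomm : ∀ (β : ℤ) (y : B), d ⁅L (β, 0), y⁆ = ⁅L (β, 0), d y⁆) (β γ γ' : ℤ) (k m : ℕ) :
    ((γ * q - β * ((k : ℤ) + q) : ℤ) : ℂ) * L.repr (d (L (β + γ, k))) (β + γ', m) =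
      ((γ' * q - β * ((m : ℤ) + q) : ℤ) : ℂ) * L.repr (d (L (γ, k))) (γ', m) := by
  have h := congrArg (fun x => L.repr x (β + γ', m)) (hcomm β (L (γ, k)))
  simp only [hL β γ 0 k, Nat.cast_zero, zero_add, map_smul, Finsupp.smul_apply,
    smul_eq_mul] at h
  rw [h, hL.repr_lie_basis_zero_left]

lemma repr_apply_basis_eq_zero_of_ne (hL : IsBlockBasis q L) (hq : q ≠ 0) {d : B →ₗ[ℂ] B}
    (hcomm : ∀ (β : ℤ) (y : B), d ⁅L (β, 0), y⁆ = ⁅L (β, 0), d y⁆) {γ γ' : ℤ} (hγ : γ ≠ γ')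
    (k m : ℕ) : L.repr (d (L (γ, k))) (γ', m) = 0 := by
  have h := hL.repr_apply_basis_of_commute hcomm 0 γ γ' k m
  simp only [zero_add, zero_mul, sub_zero] at h
  have hne : ((γ * q : ℤ) : ℂ) - ((γ' * q : ℤ) : ℂ) ≠ 0 := by
    rw [← Int.cast_sub, Int.cast_ne_zero, ← sub_mul]
    exact mul_ne_zero (sub_ne_zero.mpr hγ) (by exact_mod_cast hq)
  exact (mul_eq_zero.mp (by linear_combination h : _ * L.repr (d (L (γ, k))) (γ', m) = 0))
    |>.resolve_left hne

lemma repr_apply_basis_self_eq_zero_of_lt (hL : IsBlockBasis q L) {d : B →ₗ[ℂ] B}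
    (hcomm : ∀ (β : ℤ) (y : B), d ⁅L (β, 0), y⁆ = ⁅L (β, 0), d y⁆) {k m : ℕ} (hmk : m < k)
    (γ : ℤ) : L.repr (d (L (γ, k))) (γ, m) = 0 := by
  set g : ℤ → ℂ := fun γ => L.repr (d (L (γ, k))) (γ, m)
  have hE : ∀ β γ : ℤ, ((γ : ℂ) * q - β * (k + q)) * g (β + γ) = (γ * q - β * (m + q)) * g γ := by
    intro β γ
    have h := hL.repr_apply_basis_of_commute hcomm β γ γ k m
    push_cast at h
    exact h
  have hk : (k : ℂ) + q ≠ 0 := by exact_mod_cast (show k + q ≠ 0 by omega)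
  -- `hE (-1) 0` and `hE 1 (-1)` combine to `((k+q)(k+2q) - (m+q)(m+2q)) g 0 = 0`.
  have hg0 : g 0 = 0 := by
    have e₁ := hE (-1) 0
    have e₂ := hE 1 (-1)
    norm_num at e₁ e₂
    have hc : ((k : ℂ) + q) * (k + 2 * q) - (m + q) * (m + 2 * q) ≠ 0 := by
      have : ((k : ℤ) + q) * (k + 2 * q) ≠ (m + q) * (m + 2 * q) := by
        have : (m : ℤ) < k := by exact_mod_cast hmk
        nlinarith
      exact sub_ne_zero.mpr (by exact_mod_cast this)
    refine (mul_eq_zero.mp ?_).resolve_left hc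
    linear_combination (-(k : ℂ) - q) * e₂ + ((m : ℂ) + 2 * q) * e₁
  rcases eq_or_ne γ 0 with rfl | hγ
  · exact hg0
  · have e := hE γ 0
    rw [hg0, add_zero] at e
    refine (mul_eq_zero.mp ?_).resolve_left (mul_ne_zero (Int.cast_ne_zero.mpr hγ) hk)
    linear_combination -e

lemma repr_apply_basis_eq_zero_of_lt (hL : IsBlockBasis q L) (hq : q ≠ 0) {d : B →ₗ[ℂ] B}
    (hcomm : ∀ (β : ℤ) (y : B), d ⁅L (β, 0), y⁆ = ⁅L (β, 0), d y⁆) (γ : ℤ) {k : ℕ}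
    {p : ℤ × ℕ} (hp : p.2 < k) : L.repr (d (L (γ, k))) p = 0 := by
  obtain ⟨γ', m⟩ := p
  rcases eq_or_ne γ γ' with rfl | hγ
  · exact hL.repr_apply_basis_self_eq_zero_of_lt hcomm hp γ
  · exact hL.repr_apply_basis_eq_zero_of_ne hq hcomm hγ k m

end IsBlockBasis

theorem block_derivation_min_shift_nonneg_general (q : ℕ) (hq : 0 < q)
    (L : Module.Basis (ℤ × ℕ) ℂ B)
    (hL : ∀ (α β : ℤ) (i j : ℕ),
      ⁅L (α, i), L (β, j)⁆ =
        (((β * ((i : ℤ) + q) - α * ((j : ℤ) + q)) : ℤ) : ℂ) • L (α + β, i + j))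
    (d : B →ₗ[ℂ] B) (hd : ∀ x y : B, d ⁅x, y⁆ = ⁅d x, y⁆ + ⁅x, d y⁆)
    (α : ℤ) (hdeg : HasDegree L d α)
    (i : ℤ)
    (hi : ∀ j : ℕ, (blockFilt L j).map d ≤ blockFilt L (i + j)) :
    0 ≤ i := by
  by_contra! hneg
  have hblock : IsBlockBasis q L := hL
  have hlow : ∀ (γ : ℤ) (k : ℕ) (p : ℤ × ℕ), k ≤ p.2 → L.repr (d (L (γ, k))) p = 0 :=
    fun γ k p hp => repr_eq_zero_of_mem_blockFilt L
      (hi k ⟨L (γ, k), Submodule.subset_span ⟨γ, k, le_rfl, rfl⟩, rfl⟩) (by omega)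
  have hkill : ∀ β : ℤ, d (L (β, 0)) = 0 :=
    fun β => L.ext_elem fun p => by simpa using hlow β 0 p p.2.zero_le
  have hcomm : ∀ (β : ℤ) (y : B), d ⁅L (β, 0), y⁆ = ⁅L (β, 0), d y⁆ :=
    fun β y => by rw [hd, hkill, zero_lie, zero_add]
  refine hdeg.1 (L.ext fun ⟨γ, k⟩ => L.ext_elem fun p => ?_)
  rcases lt_or_ge p.2 k with hp | hp
  · simpa using hblock.repr_apply_basis_eq_zero_of_lt hq.ne' hcomm γ hp
  · simpa using hlow γ k p hp

/-- Let `d` be a nonzero derivation of the Block type Lie algebra `B(q)` of degree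
`α`, and let `i` be the minimal integer such that `d(B^{[j]}) ⊆ B^{[i+j]}` for all
`j ∈ ℤ_{≥0}`.  Then `i ≥ 0`. -/
theorem block_derivation_min_shift_nonneg (q : ℕ) (hq : 0 < q)
    (L : Module.Basis (ℤ × ℕ) ℂ B)
    (hL : ∀ (α β : ℤ) (i j : ℕ),
      ⁅L (α, i), L (β, j)⁆ =
        (((β * ((i : ℤ) + q) - α * ((j : ℤ) + q)) : ℤ) : ℂ) • L (α + β, i + j))
    (d : B →ₗ[ℂ] B) (hd : ∀ x y : B, d ⁅x, y⁆ = ⁅d x, y⁆ + ⁅x, d y⁆)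
    (α : ℤ) (hdeg : HasDegree L d α)
    (i : ℤ)
    (hi : ∀ j : ℕ, (blockFilt L j).map d ≤ blockFilt L (i + j))
    (hmin : ∀ i' : ℤ, (∀ j : ℕ, (blockFilt L j).map d ≤ blockFilt L (i' + j)) → i ≤ i') :
    0 ≤ i :=
  block_derivation_min_shift_nonneg_general q hq L hL d hd α hdeg i hi
end

section
/- The bilinear form φ on B(q) determined on basis elements by φ(L_{α,i}, L_{β,j}) = δ_{α+β,0} δ_{i,0} δ_{j,0} (α³ − α)/12 is a 2-cocycle on B(q) that is not a 2-coboundary, and every 2-cocycle on B(q) is the sum of a complex scalar multiple of φ and a 2-coboundary. In particular the second cohomology group H²(B(q), ℂ) is one-dimensional, spanned by the class of φ. -/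
variable {B : Type} [LieRing B] [LieAlgebra ℂ B]

/-- A 2-cocycle on a complex Lie algebra `B`: a bilinear form `ψ : B × B → ℂ` which is
skew-symmetric and satisfies the cocycle identity
`ψ([x,y],z) + ψ([y,z],x) + ψ([z,x],y) = 0`. -/
def IsTwoCocycle (ψ : B →ₗ[ℂ] B →ₗ[ℂ] ℂ) : Prop :=
  (∀ x y : B, ψ x y = - ψ y x) ∧
  (∀ x y z : B, ψ ⁅x, y⁆ z + ψ ⁅y, z⁆ x + ψ ⁅z, x⁆ y = 0)

/-- A 2-coboundary (trivial 2-cocycle): `ψ(x,y) = f([x,y])` for some linear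
`f : B → ℂ`. -/
def IsTwoCoboundary (ψ : B →ₗ[ℂ] B →ₗ[ℂ] ℂ) : Prop :=
  ∃ f : B →ₗ[ℂ] ℂ, ∀ x y : B, ψ x y = f ⁅x, y⁆


/-! Write `Ψ p p' = ψ (L p) (L p')`. Because `L (0, 0)` acts diagonally, `⁅L (α, i), L (0, 0)⁆ =
-α q • L (α, i)`, the cocycle identity with one argument `L (0, 0)` shows that a suitable
coboundary agrees with `ψ` on all pairs of total degree `α + β ≠ 0`. On the pairs
`(L (α, i), L (-α, j))` the cocycle identity then forces `ψ (L (0, i)) (L (0, j)) = 0`, makes the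
value depend only on `i + j`, additive (hence linear) in `α` when `i + j > 0`, and a solution of
the Witt functional equation `(β - α) u (α + β) + (α + 2β) u α = (2α + β) u β` when `i = j = 0`;
such solutions are `a α³ + b α`. All of this except `a α³ - a α` is again a coboundary. Finally
`φ` is not a coboundary because coboundaries are linear in `α` on `(L (α, 0), L (-α, 0))`. -/

theorem eq_zero_of_witt_relation {w : ℤ → ℂ}
    (hw : ∀ α β : ℤ,
      ((β : ℂ) - α) * w (α + β) + ((α : ℂ) + 2 * β) * w α - (2 * (α : ℂ) + β) * w β = 0)
    (h1 : w 1 = 0) (h2 : w 2 = 0) (α : ℤ) : w α = 0 := by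
  have hpos : ∀ n : ℤ, 1 ≤ n → w n = 0 ∧ w (n + 1) = 0 := by
    refine Int.leInduction ⟨h1, by simpa using h2⟩ fun n hn ih => ⟨ih.2, ?_⟩
    have hn0 : (n : ℂ) ≠ 0 := by exact_mod_cast (show n ≠ 0 by omega)
    have h := hw (n + 1) 1
    rw [ih.2, h1, show n + 1 + 1 = n + 2 by ring] at h
    push_cast at h
    have : (n : ℂ) * w (n + 2) = 0 := by linear_combination -h
    simpa [add_assoc, hn0] using this
  rcases lt_trichotomy α 0 with hα | rfl | hα
  · have h := hw (-α) α
    rw [(hpos (-α) (by omega)).1, neg_add_cancel] at h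
    have h0 := hw 0 1
    simp only [zero_add, Int.cast_zero, Int.cast_one] at h0
    have hα0 : (α : ℂ) ≠ 0 := by exact_mod_cast hα.ne
    have : (α : ℂ) * w α = 0 := by push_cast at h; linear_combination h - α * h0
    simpa [hα0] using this
  · have h := hw 0 1
    simp only [zero_add, Int.cast_zero, Int.cast_one] at h
    linear_combination h / 2
  · exact (hpos α hα).1

theorem exists_cubic_of_witt_relation {u : ℤ → ℂ}
    (hu : ∀ α β : ℤ,
      ((β : ℂ) - α) * u (α + β) + ((α : ℂ) + 2 * β) * u α - (2 * (α : ℂ) + β) * u β = 0) :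
    ∃ a b : ℂ, ∀ α : ℤ, u α = a * α ^ 3 + b * α := by
  set a := (u 2 - 2 * u 1) / 6
  set b := u 1 - a
  refine ⟨a, b, fun α => ?_⟩
  have hw := eq_zero_of_witt_relation (w := fun α => u α - a * α ^ 3 - b * α)
    (fun α β => by push_cast; linear_combination hu α β) (by simp [b]) (by simp [a, b]; ring) α
  linear_combination hw

section Basis

variable {ι : Type*} (b : Module.Basis ι ℂ B) {ψ : B →ₗ[ℂ] B →ₗ[ℂ] ℂ}

theorem isTwoCocycle_of_basis (hskew : ∀ i j, ψ (b i) (b j) = -ψ (b j) (b i))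
    (hcyc : ∀ i j k, ψ ⁅b i, b j⁆ (b k) + ψ ⁅b j, b k⁆ (b i) + ψ ⁅b k, b i⁆ (b j) = 0) :
    IsTwoCocycle ψ := by
  refine ⟨fun x y => ?_, fun x y z => ?_⟩
  · have h : ψ = -ψ.flip := LinearMap.ext_basis b b hskew
    exact congr($h x y)
  · -- `T x y z = ψ ⁅x, y⁆ z`; the three summands below are its cyclic permutations.
    let T : B →ₗ[ℂ] B →ₗ[ℂ] B →ₗ[ℂ] ℂ :=
      LinearMap.llcomp ℂ B B _ ψ ∘ₗ (LieAlgebra.ad ℂ B : B →ₗ[ℂ] Module.End ℂ B)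
    have h : T + (LinearMap.lflip.toLinearMap ∘ₗ T).flip + LinearMap.lflip.toLinearMap ∘ₗ T.flip
        = 0 :=
      b.ext fun i => b.ext fun j => b.ext fun k => hcyc i j k
    exact congr($h x y z)

theorem isTwoCoboundary_of_basis (f : B →ₗ[ℂ] ℂ) (h : ∀ i j, ψ (b i) (b j) = f ⁅b i, b j⁆) :
    IsTwoCoboundary ψ := by
  have h' : ψ = LinearMap.llcomp ℂ B B ℂ f ∘ₗ (LieAlgebra.ad ℂ B : B →ₗ[ℂ] Module.End ℂ B) :=
    LinearMap.ext_basis b b h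
  exact ⟨f, fun x y => congr($h' x y)⟩

end Basis

namespace BlockAlgebra

variable (q : ℕ)

def coeff (α β : ℤ) (i j : ℕ) : ℂ := ((β * ((i : ℤ) + q) - α * ((j : ℤ) + q) : ℤ) : ℂ)

def IsStandardBasis (L : Module.Basis (ℤ × ℕ) ℂ B) : Prop :=
  ∀ (α β : ℤ) (i j : ℕ), ⁅L (α, i), L (β, j)⁆ = coeff q α β i j • L (α + β, i + j)

/-- For a standard basis `L` of `B(q)`, this says that `ψ (L p) (L p') = Ψ p p'` defines a
2-cocycle (`isTwoCocycle_iff`). -/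
structure IsCocycle (Ψ : ℤ × ℕ → ℤ × ℕ → ℂ) : Prop where
  skew : ∀ p p', Ψ p p' = -Ψ p' p
  cyclic : ∀ (α β γ : ℤ) (i j k : ℕ),
    coeff q α β i j * Ψ (α + β, i + j) (γ, k) + coeff q β γ j k * Ψ (β + γ, j + k) (α, i)
      + coeff q γ α k i * Ψ (γ + α, k + i) (β, j) = 0

def coboundary (F : ℤ × ℕ → ℂ) (p p' : ℤ × ℕ) : ℂ :=
  coeff q p.1 p'.1 p.2 p'.2 * F (p.1 + p'.1, p.2 + p'.2)

noncomputable def virasoro (p p' : ℤ × ℕ) : ℂ :=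
  if p.1 + p'.1 = 0 ∧ p.2 = 0 ∧ p'.2 = 0 then ((p.1 : ℂ) ^ 3 - p.1) / 12 else 0

variable {q}

theorem coeff_swap (α β : ℤ) (i j : ℕ) : coeff q β α j i = -coeff q α β i j := by
  simp only [coeff]; push_cast; ring

theorem coeff_jacobi (α β γ : ℤ) (i j k : ℕ) :
    coeff q α β i j * coeff q (α + β) γ (i + j) k + coeff q β γ j k * coeff q (β + γ) α (j + k) i
      + coeff q γ α k i * coeff q (γ + α) β (k + i) j = 0 := by
  simp only [coeff]; push_cast; ring

theorem coboundary_add (F G : ℤ × ℕ → ℂ) :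
    coboundary q (F + G) = coboundary q F + coboundary q G := by
  ext p p'; simp only [coboundary, Pi.add_apply]; ring

theorem isCocycle_coboundary (F : ℤ × ℕ → ℂ) : IsCocycle q (coboundary q F) where
  skew p p' := by
    simp only [coboundary, coeff_swap p.1, add_comm p'.1, add_comm p'.2, neg_mul, neg_neg]
  cyclic α β γ i j k := by
    simp only [coboundary]
    rw [show β + γ + α = α + β + γ by ring, show γ + α + β = α + β + γ by ring,
      show j + k + i = i + j + k by omega, show k + i + j = i + j + k by omega]
    linear_combination F (α + β + γ, i + j + k) * coeff_jacobi α β γ i j k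

theorem IsCocycle.sub {Ψ Φ : ℤ × ℕ → ℤ × ℕ → ℂ} (hΨ : IsCocycle q Ψ) (hΦ : IsCocycle q Φ) :
    IsCocycle q (Ψ - Φ) where
  skew p p' := by simp only [Pi.sub_apply, hΨ.skew p p', hΦ.skew p p']; ring
  cyclic α β γ i j k := by
    simp only [Pi.sub_apply]
    linear_combination hΨ.cyclic α β γ i j k - hΦ.cyclic α β γ i j k

theorem isCocycle_virasoro : IsCocycle q virasoro where
  skew := by
    rintro ⟨α, i⟩ ⟨β, j⟩
    simp only [virasoro]
    by_cases h : α + β = 0 ∧ i = 0 ∧ j = 0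
    · obtain ⟨hβ, rfl, rfl⟩ := h
      obtain rfl : β = -α := by omega
      simp only [neg_add_cancel, and_self, if_true, add_neg_cancel]; push_cast; ring
    · rw [if_neg h, if_neg (by omega), neg_zero]
  cyclic α β γ i j k := by
    simp only [virasoro, coeff]
    split_ifs with h₁ <;> try omega
    · obtain ⟨hγ, hij, rfl⟩ := h₁
      obtain rfl : γ = -α - β := by omega
      obtain ⟨rfl, rfl⟩ : i = 0 ∧ j = 0 := by omega
      push_cast; ring
    · simp

variable {Ψ : ℤ × ℕ → ℤ × ℕ → ℂ}

theorem IsCocycle.exists_eq_coboundary_of_add_ne_zero (hΨ : IsCocycle q Ψ) (hq : 0 < q) :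
    ∃ F, ∀ (α β : ℤ) (i j : ℕ), α + β ≠ 0 → Ψ (α, i) (β, j) = coboundary q F (α, i) (β, j) := by
  refine ⟨fun p => -Ψ p (0, 0) / (p.1 * q), fun α β i j hαβ => ?_⟩
  have hq' : (q : ℂ) ≠ 0 := by exact_mod_cast hq.ne'
  have hαβ' : (α : ℂ) + β ≠ 0 := by exact_mod_cast hαβ
  have h := hΨ.cyclic α β 0 i j 0
  simp only [add_zero, zero_add, hΨ.skew (β, j) (α, i)] at h
  simp only [coboundary, coeff] at h ⊢
  push_cast at h ⊢
  field_simp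
  linear_combination h

theorem IsCocycle.diag_cyclic (hΨ : IsCocycle q Ψ) (α β : ℤ) (i j k : ℕ) :
    coeff q α β i j * Ψ (α + β, i + j) (-(α + β), k)
      - coeff q β (-(α + β)) j k * Ψ (α, i) (-α, j + k)
      - coeff q (-(α + β)) α k i * Ψ (β, j) (-β, k + i) = 0 := by
  have h := hΨ.cyclic α β (-(α + β)) i j k
  rw [show β + -(α + β) = -α by ring, show -(α + β) + α = -β by ring,
    hΨ.skew (-α, j + k), hΨ.skew (-β, k + i)] at h
  linear_combination h

theorem IsCocycle.diag_shift (hΨ : IsCocycle q Ψ) {α : ℤ} (hα : α ≠ 0) (i j k : ℕ) :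
    ((k : ℂ) + q) * (Ψ (α, k + i) (-α, j) - Ψ (α, i) (-α, j + k))
      = ((i : ℂ) + j + 2 * q) * Ψ (0, i + j) (0, k) := by
  have hα' : (α : ℂ) ≠ 0 := by exact_mod_cast hα
  have h := hΨ.diag_cyclic α (-α) i j k
  rw [show α + -α = 0 by ring, neg_neg, hΨ.skew (-α, j)] at h
  simp only [neg_zero] at h
  apply mul_left_cancel₀ hα'
  simp only [coeff] at h
  push_cast at h ⊢
  linear_combination h

theorem IsCocycle.apply_zero_zero_eq_zero_right (hΨ : IsCocycle q Ψ) (hq : 0 < q) (s : ℕ) :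
    Ψ (0, s) (0, 0) = 0 := by
  have h := hΨ.diag_shift one_ne_zero s 0 0
  simp only [add_zero, zero_add, Nat.cast_zero, sub_self, mul_zero] at h
  have hs : (s : ℂ) + 2 * q ≠ 0 := by exact_mod_cast (show s + 2 * q ≠ 0 by omega)
  exact (mul_eq_zero.1 h.symm).resolve_left hs

theorem IsCocycle.apply_zero_zero_eq_zero_left (hΨ : IsCocycle q Ψ) (hq : 0 < q) (s : ℕ) :
    Ψ (0, 0) (0, s) = 0 := by
  rw [hΨ.skew, hΨ.apply_zero_zero_eq_zero_right hq, neg_zero]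

theorem IsCocycle.diag_swap (hΨ : IsCocycle q Ψ) (hq : 0 < q) {α : ℤ} (hα : α ≠ 0) (s : ℕ) :
    Ψ (α, s) (-α, 0) = Ψ (α, 0) (-α, s) := by
  have h := hΨ.diag_shift hα 0 0 s
  simp only [add_zero, zero_add, hΨ.apply_zero_zero_eq_zero_left hq, mul_zero] at h
  have hs : (s : ℂ) + q ≠ 0 := by exact_mod_cast (show s + q ≠ 0 by omega)
  exact sub_eq_zero.1 ((mul_eq_zero.1 h).resolve_left hs)

theorem IsCocycle.diag_add_of_ne_zero (hΨ : IsCocycle q Ψ) (hq : 0 < q) {s : ℕ} (hs : 0 < s)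
    {α β : ℤ} (hα : α ≠ 0) (hβ : β ≠ 0) (hαβ : α + β ≠ 0) :
    Ψ (α + β, 0) (-(α + β), s) = Ψ (α, 0) (-α, s) + Ψ (β, 0) (-β, s) := by
  have hα' : (α : ℂ) ≠ 0 := by exact_mod_cast hα
  have hs' : (s : ℂ) ≠ 0 := by exact_mod_cast hs.ne'
  have h₁ := hΨ.diag_cyclic α β 0 0 s
  have h₂ := hΨ.diag_cyclic α β 0 s 0
  simp only [add_zero, zero_add] at h₁ h₂
  rw [hΨ.diag_swap hq hαβ s, hΨ.diag_swap hq hβ s] at h₂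
  apply mul_left_cancel₀ (mul_ne_zero hα' hs')
  simp only [coeff] at h₁ h₂
  push_cast at h₁ h₂ ⊢
  linear_combination h₁ - h₂

theorem IsCocycle.apply_zero_zero_eq_zero (hΨ : IsCocycle q Ψ) (hq : 0 < q) (a b : ℕ) :
    Ψ (0, a) (0, b) = 0 := by
  rcases Nat.eq_zero_or_pos a with rfl | ha
  · exact hΨ.apply_zero_zero_eq_zero_left hq b
  have h2 : (1 + 1 : ℤ) ≠ 0 := by norm_num
  have hc := hΨ.diag_cyclic 1 1 0 b a
  have hs₂ := hΨ.diag_shift h2 0 a b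
  have hs₁ := hΨ.diag_shift one_ne_zero 0 a b
  have hadd := hΨ.diag_add_of_ne_zero hq (s := a + b) (by omega) one_ne_zero one_ne_zero h2
  simp only [add_zero, zero_add, add_comm b a] at hc hs₁ hs₂
  have h : ((a : ℂ) + 2 * q) * ((a : ℂ) + b + 3 * q) * Ψ (0, a) (0, b) = 0 := by
    simp only [coeff] at hc
    push_cast at hc hs₁ hs₂ hadd ⊢
    linear_combination (-((b : ℂ) + q)) * hc - (b : ℂ) * hs₂ - ((a : ℂ) + 3 * q) * hs₁
      - (b : ℂ) * ((b : ℂ) + q) * hadd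
  have hne : ((a : ℂ) + 2 * q) * ((a : ℂ) + b + 3 * q) ≠ 0 := by
    exact_mod_cast (show (a + 2 * q) * (a + b + 3 * q) ≠ 0 by positivity)
  exact (mul_eq_zero.1 h).resolve_left hne

theorem IsCocycle.diag_eq (hΨ : IsCocycle q Ψ) (hq : 0 < q) (α : ℤ) (i j : ℕ) :
    Ψ (α, i) (-α, j) = Ψ (α, 0) (-α, i + j) := by
  rcases eq_or_ne α 0 with rfl | hα
  · simp only [neg_zero, hΨ.apply_zero_zero_eq_zero hq]
  have h := hΨ.diag_shift hα 0 j i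
  simp only [add_zero, zero_add, hΨ.apply_zero_zero_eq_zero hq, mul_zero, add_comm j i] at h
  have hi : (i : ℂ) + q ≠ 0 := by exact_mod_cast (show i + q ≠ 0 by omega)
  exact sub_eq_zero.1 ((mul_eq_zero.1 h).resolve_left hi)

theorem IsCocycle.diag_add (hΨ : IsCocycle q Ψ) (hq : 0 < q) {s : ℕ} (hs : 0 < s) (α β : ℤ) :
    Ψ (α + β, 0) (-(α + β), s) = Ψ (α, 0) (-α, s) + Ψ (β, 0) (-β, s) := by
  have hzero : Ψ (0, 0) (-0, s) = 0 := by
    rw [neg_zero]; exact hΨ.apply_zero_zero_eq_zero hq 0 s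
  rcases eq_or_ne α 0 with rfl | hα
  · rw [zero_add, hzero, zero_add]
  rcases eq_or_ne β 0 with rfl | hβ
  · rw [add_zero, hzero, add_zero]
  rcases eq_or_ne (α + β) 0 with hαβ | hαβ
  · obtain rfl : β = -α := by omega
    rw [hαβ, hzero, hΨ.skew (-α, 0), neg_neg, hΨ.diag_eq hq α s 0, add_zero, add_neg_cancel]
  · exact hΨ.diag_add_of_ne_zero hq hs hα hβ hαβ

theorem IsCocycle.diag_eq_mul (hΨ : IsCocycle q Ψ) (hq : 0 < q) {s : ℕ} (hs : 0 < s) (α : ℤ) :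
    Ψ (α, 0) (-α, s) = α * Ψ (1, 0) (-1, s) := by
  simpa using (AddMonoidHom.mk' (fun α => Ψ (α, 0) (-α, s)) (hΨ.diag_add hq hs)).apply_int ℂ α

theorem IsCocycle.witt_relation (hΨ : IsCocycle q Ψ) (hq : 0 < q) (α β : ℤ) :
    ((β : ℂ) - α) * Ψ (α + β, 0) (-(α + β), 0) + ((α : ℂ) + 2 * β) * Ψ (α, 0) (-α, 0)
      - (2 * (α : ℂ) + β) * Ψ (β, 0) (-β, 0) = 0 := by
  have hq' : (q : ℂ) ≠ 0 := by exact_mod_cast hq.ne'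
  have h := hΨ.diag_cyclic α β 0 0 0
  apply mul_left_cancel₀ hq'
  simp only [coeff] at h
  push_cast at h ⊢
  linear_combination h

theorem IsCocycle.exists_diag_eq (hΨ : IsCocycle q Ψ) (hq : 0 < q) :
    ∃ c : ℂ, ∀ (α : ℤ) (i j : ℕ),
      Ψ (α, i) (-α, j) = α * Ψ (1, 0) (-1, i + j) + c * virasoro (α, i) (-α, j) := by
  obtain ⟨a, b, hab⟩ := exists_cubic_of_witt_relation
    (u := fun α => Ψ (α, 0) (-α, 0)) (hΨ.witt_relation hq)
  refine ⟨12 * a, fun α i j => ?_⟩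
  rw [hΨ.diag_eq hq, virasoro]
  rcases Nat.eq_zero_or_pos (i + j) with hij | hij
  · obtain ⟨rfl, rfl⟩ : i = 0 ∧ j = 0 := by omega
    rw [if_pos (by simp), add_zero, hab α, hab 1]
    push_cast; ring
  · rw [if_neg (by omega), mul_zero, add_zero, hΨ.diag_eq_mul hq hij]

theorem IsCocycle.eq_smul_virasoro_add_coboundary (hΨ : IsCocycle q Ψ) (hq : 0 < q)
    (hdiag : ∀ (α β : ℤ) (i j : ℕ), α + β ≠ 0 → Ψ (α, i) (β, j) = 0) :
    ∃ (c : ℂ) (F : ℤ × ℕ → ℂ), Ψ = c • virasoro + coboundary q F := by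
  obtain ⟨c, hc⟩ := hΨ.exists_diag_eq hq
  -- `coboundary q F (α, i) (-α, j) = -α (i + j + 2q) F (0, i + j)`
  refine ⟨c, fun p => if p.1 = 0 then -Ψ (1, 0) (-1, p.2) / (p.2 + 2 * q) else 0, ?_⟩
  ext ⟨α, i⟩ ⟨β, j⟩
  simp only [Pi.add_apply, Pi.smul_apply, smul_eq_mul, coboundary]
  by_cases hαβ : α + β = 0
  · obtain rfl : β = -α := by omega
    have hij : (i : ℂ) + j + 2 * q ≠ 0 := by exact_mod_cast (show i + j + 2 * q ≠ 0 by omega)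
    rw [hc, if_pos hαβ, add_comm]
    congr 1
    simp only [coeff]
    push_cast
    rw [mul_div_assoc', eq_div_iff hij]
    ring
  · rw [hdiag α β i j hαβ, virasoro, if_neg (by omega), if_neg hαβ]
    simp

theorem IsCocycle.exists_sub_smul_virasoro_eq_coboundary (hΨ : IsCocycle q Ψ) (hq : 0 < q) :
    ∃ (c : ℂ) (F : ℤ × ℕ → ℂ), Ψ - c • virasoro = coboundary q F := by
  obtain ⟨f, hf⟩ := hΨ.exists_eq_coboundary_of_add_ne_zero hq
  obtain ⟨c, F, hF⟩ := (hΨ.sub (isCocycle_coboundary f)).eq_smul_virasoro_add_coboundary hq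
    fun α β i j hαβ => sub_eq_zero.2 (hf α β i j hαβ)
  refine ⟨c, f + F, ?_⟩
  rw [coboundary_add, sub_eq_iff_eq_add.1 hF]
  abel

variable {L : Module.Basis (ℤ × ℕ) ℂ B} {ψ : B →ₗ[ℂ] B →ₗ[ℂ] ℂ}

theorem isTwoCocycle_iff (hL : IsStandardBasis q L) :
    IsTwoCocycle ψ ↔ IsCocycle q fun p p' => ψ (L p) (L p') := by
  have hcyc : ∀ (α β γ : ℤ) (i j k : ℕ),
      ψ ⁅L (α, i), L (β, j)⁆ (L (γ, k)) + ψ ⁅L (β, j), L (γ, k)⁆ (L (α, i))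
        + ψ ⁅L (γ, k), L (α, i)⁆ (L (β, j))
      = coeff q α β i j * ψ (L (α + β, i + j)) (L (γ, k))
        + coeff q β γ j k * ψ (L (β + γ, j + k)) (L (α, i))
        + coeff q γ α k i * ψ (L (γ + α, k + i)) (L (β, j)) := by
    intro α β γ i j k
    simp only [hL α β, hL β γ, hL γ α, map_smul, LinearMap.smul_apply, smul_eq_mul]
  refine ⟨fun h => ⟨fun p p' => h.1 _ _, fun α β γ i j k => ?_⟩, fun h => ?_⟩
  · rw [← hcyc]; exact h.2 _ _ _
  · refine isTwoCocycle_of_basis L (fun p p' => h.skew p p') ?_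
    rintro ⟨α, i⟩ ⟨β, j⟩ ⟨γ, k⟩
    rw [hcyc]; exact h.cyclic α β γ i j k

theorem isTwoCoboundary_of_eq_coboundary (hL : IsStandardBasis q L) (F : ℤ × ℕ → ℂ)
    (h : ∀ p p', ψ (L p) (L p') = coboundary q F p p') : IsTwoCoboundary ψ := by
  refine isTwoCoboundary_of_basis L (L.constr ℂ F) ?_
  rintro ⟨α, i⟩ ⟨β, j⟩
  rw [h, hL, map_smul, Module.Basis.constr_basis, smul_eq_mul]
  rfl

theorem IsTwoCoboundary.apply_two_neg_two (hL : IsStandardBasis q L)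
    (hψ : IsTwoCoboundary ψ) :
    ψ (L (2, 0)) (L (-2, 0)) = 2 * ψ (L (1, 0)) (L (-1, 0)) := by
  obtain ⟨f, hf⟩ := hψ
  rw [hf, hf, hL, hL, map_smul, map_smul]
  norm_num [coeff]
  ring

end BlockAlgebra

/-- The bilinear form `φ` on the Block type Lie algebra `B(q)` determined on basis
elements by `φ(L_{α,i}, L_{β,j}) = δ_{α+β,0} δ_{i,0} δ_{j,0} (α³ − α)/12` is a
2-cocycle which is not a 2-coboundary, and every 2-cocycle on `B(q)` is the sum of a
scalar multiple of `φ` and a 2-coboundary; hence `H²(B(q), ℂ)` is one-dimensional,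
spanned by the class of `φ`. -/
theorem block_second_cohomology (q : ℕ) (hq : 0 < q)
    (L : Module.Basis (ℤ × ℕ) ℂ B)
    (hL : ∀ (α β : ℤ) (i j : ℕ),
      ⁅L (α, i), L (β, j)⁆ =
        (((β * ((i : ℤ) + q) - α * ((j : ℤ) + q)) : ℤ) : ℂ) • L (α + β, i + j)) :
    ∃ φ : B →ₗ[ℂ] B →ₗ[ℂ] ℂ,
      (∀ (α β : ℤ) (i j : ℕ),
        φ (L (α, i)) (L (β, j)) =
          if α + β = 0 ∧ i = 0 ∧ j = 0 then ((α : ℂ) ^ 3 - (α : ℂ)) / 12 else 0) ∧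
      IsTwoCocycle φ ∧
      ¬ IsTwoCoboundary φ ∧
      (∀ ψ : B →ₗ[ℂ] B →ₗ[ℂ] ℂ, IsTwoCocycle ψ →
        ∃ c : ℂ, IsTwoCoboundary (ψ - c • φ)) := by
  let φ : B →ₗ[ℂ] B →ₗ[ℂ] ℂ := L.constr ℂ fun p => L.constr ℂ (BlockAlgebra.virasoro p)
  have hφ : (fun p p' => φ (L p) (L p')) = BlockAlgebra.virasoro := by ext; simp [φ]
  refine ⟨φ, fun α β i j => congr_fun₂ hφ (α, i) (β, j), ?_, fun h => ?_, fun ψ hψ => ?_⟩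
  · rw [BlockAlgebra.isTwoCocycle_iff hL, hφ]
    exact BlockAlgebra.isCocycle_virasoro
  · have h₂ := BlockAlgebra.IsTwoCoboundary.apply_two_neg_two hL h
    norm_num [congr_fun₂ hφ, BlockAlgebra.virasoro] at h₂
  · obtain ⟨c, F, hF⟩ :=
      ((BlockAlgebra.isTwoCocycle_iff hL).1 hψ).exists_sub_smul_virasoro_eq_coboundary hq
    refine ⟨c, BlockAlgebra.isTwoCoboundary_of_eq_coboundary hL F fun p p' => ?_⟩
    rw [← hF, ← hφ]
    simp only [LinearMap.sub_apply, LinearMap.smul_apply, Pi.sub_apply, Pi.smul_apply]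
end

section
/- Let φ be a 2-cocycle on B(q) satisfying φ(L_{α,i}, L_{0,0}) = 0 for all α ≠ 0, i ∈ ℤ_{≥0}, and φ(L_{−1,i}, L_{1,0}) = 0 for all i ∈ ℤ_{≥0}. Then: (1) φ(L_{α,i}, L_{β,j}) = 0 whenever α + β ≠ 0; and (2) φ(L_{α,i}, L_{−α,j}) = 0 whenever i ≠ j. -/
variable {B : Type} [LieRing B] [LieAlgebra ℂ B]

/-!
Every instance of the cocycle identity on three basis vectors is a linear relation between three
values of `φ` with integer coefficients, and for `q > 0` these coefficients vanish only for a few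
exceptional indices. The triple `L_{α,i}, L_{β,j}, L_{0,0}` kills `φ(L_{α,i}, L_{β,j})` when
`α + β ≠ 0`. Writing `E_α = φ(L_{α,i}, L_{-α,0})`, the triple with `L_{1,0}` gives a two-term
recursion in `α`, the triple `L_{0,i}, L_{-α,0}, L_{α,0}` gives `E_{-α} = -E_α`, and together
with `E_{-1} = 0` they force `E_α = 0` for all `α` once `i > 0`. The triple
`L_{α,0}, L_{-α,j}, L_{0,k}` then expresses `φ(L_{α,k}, L_{-α,j})` through
`φ(L_{0,j}, L_{0,k})`, and the triple `L_{2,i}, L_{-1,j}, L_{-1,0}` combined with this for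
`α = 1, 2` shows `φ(L_{0,j}, L_{0,i}) = 0` whenever `i + j > 0`.
-/

def IsBlockFamily (q : ℕ) (L : ℤ × ℕ → B) : Prop :=
  ∀ (α β : ℤ) (i j : ℕ),
    ⁅L (α, i), L (β, j)⁆ = (((β * ((i : ℤ) + q) - α * ((j : ℤ) + q)) : ℤ) : ℂ) • L (α + β, i + j)

lemma eq_zero_of_intCast_mul_eq_zero {R : Type*} [Ring R] [NoZeroDivisors R] [CharZero R]
    {c : ℤ} {x : R} (hc : c ≠ 0) (h : (c : R) * x = 0) : x = 0 :=
  (mul_eq_zero.mp h).resolve_left (Int.cast_ne_zero.mpr hc)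

namespace IsTwoCocycle

variable {q : ℕ} {L : ℤ × ℕ → B} {φ : B →ₗ[ℂ] B →ₗ[ℂ] ℂ}

theorem cyclic_block (hφ : IsTwoCocycle φ) (hL : IsBlockFamily q L) (α β γ : ℤ) (i j k : ℕ) :
    (((β * ((i : ℤ) + q) - α * ((j : ℤ) + q)) : ℤ) : ℂ) * φ (L (α + β, i + j)) (L (γ, k))
      + (((γ * ((j : ℤ) + q) - β * ((k : ℤ) + q)) : ℤ) : ℂ) * φ (L (β + γ, j + k)) (L (α, i))
      + (((α * ((k : ℤ) + q) - γ * ((i : ℤ) + q)) : ℤ) : ℂ) * φ (L (γ + α, k + i)) (L (β, j))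
      = 0 := by
  have h := hφ.2 (L (α, i)) (L (β, j)) (L (γ, k))
  rw [hL α β i j, hL β γ j k, hL γ α k i] at h
  simpa only [map_smul, LinearMap.smul_apply, smul_eq_mul] using h

theorem apply_eq_zero_of_add_ne_zero (hφ : IsTwoCocycle φ) (hL : IsBlockFamily q L)
    (hq : 0 < q) (h1 : ∀ (α : ℤ) (i : ℕ), α ≠ 0 → φ (L (α, i)) (L (0, 0)) = 0)
    {α β : ℤ} (i j : ℕ) (hαβ : α + β ≠ 0) : φ (L (α, i)) (L (β, j)) = 0 := by
  have hc := hφ.cyclic_block hL α β 0 i j 0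
  simp only [add_zero, zero_add] at hc
  rw [h1 (α + β) (i + j) hαβ, hφ.1 (L (β, j))] at hc
  refine eq_zero_of_intCast_mul_eq_zero (c := (α + β) * q) (mul_ne_zero hαβ (by omega)) ?_
  linear_combination (norm := (push_cast; ring1)) hc

theorem antidiag_recursion (hφ : IsTwoCocycle φ) (hL : IsBlockFamily q L)
    (h2 : ∀ i : ℕ, φ (L (-1, i)) (L (1, 0)) = 0) (α : ℤ) (i j : ℕ) :
    (((α - 1) * q - i : ℤ) : ℂ) * φ (L (α + 1, i)) (L (-α - 1, j))
      = (((j : ℤ) + (α + 2) * q : ℤ) : ℂ) * φ (L (α, i)) (L (-α, j)) := by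
  have hc := hφ.cyclic_block hL α (-α - 1) 1 i j 0
  rw [show α + (-α - 1) = -1 by ring, show -α - 1 + 1 = -α by ring, add_comm 1 α] at hc
  simp only [add_zero, zero_add] at hc
  rw [h2 (i + j), hφ.1 (L (-α, j))] at hc
  linear_combination (norm := (push_cast; ring1)) hc

theorem zero_mode_right_zero (hφ : IsTwoCocycle φ) (hL : IsBlockFamily q L) (hq : 0 < q)
    (h2 : ∀ i : ℕ, φ (L (-1, i)) (L (1, 0)) = 0) (i : ℕ) : φ (L (0, i)) (L (0, 0)) = 0 := by
  have h := hφ.antidiag_recursion hL h2 (-1) i 0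
  rw [show (-1 : ℤ) + 1 = 0 by ring, show -(-1 : ℤ) - 1 = 0 by ring, neg_neg, h2 i] at h
  refine eq_zero_of_intCast_mul_eq_zero (c := -2 * q - i) (by omega) ?_
  linear_combination (norm := (push_cast; ring1)) h

theorem antidiag_neg (hφ : IsTwoCocycle φ) (hL : IsBlockFamily q L) (hq : 0 < q)
    (h2 : ∀ i : ℕ, φ (L (-1, i)) (L (1, 0)) = 0) {α : ℤ} (hα : α ≠ 0) (i : ℕ) :
    φ (L (-α, i)) (L (α, 0)) = -φ (L (α, i)) (L (-α, 0)) := by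
  have hc := hφ.cyclic_block hL 0 (-α) α i 0 0
  simp only [add_zero, zero_add, neg_add_cancel] at hc
  rw [hφ.1 (L (0, 0)), hφ.zero_mode_right_zero hL hq h2 i] at hc
  refine eq_neg_of_add_eq_zero_left (eq_zero_of_intCast_mul_eq_zero
    (c := α * (i + q)) (mul_ne_zero hα (by omega)) ?_)
  linear_combination (norm := (push_cast; ring1)) -hc

/-- The recursion `antidiag_recursion` cannot reach `α = -2`: its coefficient `(α + 2) q` vanishes
there. -/
theorem antidiag_neg_two (hφ : IsTwoCocycle φ) (hL : IsBlockFamily q L) (hq : 0 < q)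
    (h2 : ∀ i : ℕ, φ (L (-1, i)) (L (1, 0)) = 0) {i : ℕ} (hi : 0 < i) :
    φ (L (-2, i)) (L (2, 0)) = 0 := by
  have hE1 := hφ.antidiag_neg hL hq h2 (α := -1) (by norm_num) i
  rw [neg_neg, h2 i, neg_zero] at hE1
  have hc := hφ.cyclic_block hL (-1) 2 (-1) i 0 0
  norm_num only [add_zero, zero_add] at hc
  rw [hE1, hφ.1 (L (1, 0)), h2 i] at hc
  refine eq_zero_of_intCast_mul_eq_zero (c := i) (by omega) ?_
  linear_combination (norm := (push_cast; ring1)) hc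

theorem antidiag_of_neg (hφ : IsTwoCocycle φ) (hL : IsBlockFamily q L) (hq : 0 < q)
    (h2 : ∀ i : ℕ, φ (L (-1, i)) (L (1, 0)) = 0) {i : ℕ} (hi : 0 < i) {α : ℤ} (hα : α < 0) :
    φ (L (α, i)) (L (-α, 0)) = 0 := by
  obtain rfl | hα : α = -1 ∨ α ≤ -2 := by omega
  · exact h2 i
  induction α, hα using Int.leInductionDown with
  | base => exact hφ.antidiag_neg_two hL hq h2 hi
  | pred n hn ih =>
    have h := hφ.antidiag_recursion hL h2 (n - 1) i 0
    rw [sub_add_cancel, show -(n - 1) - 1 = -n by ring, ih (by omega)] at h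
    refine eq_zero_of_intCast_mul_eq_zero (c := (n + 1) * q) (mul_ne_zero (by omega) (by omega)) ?_
    linear_combination (norm := (push_cast; ring1)) -h

theorem antidiag_zero_right (hφ : IsTwoCocycle φ) (hL : IsBlockFamily q L) (hq : 0 < q)
    (h2 : ∀ i : ℕ, φ (L (-1, i)) (L (1, 0)) = 0) {i : ℕ} (hi : 0 < i) (α : ℤ) :
    φ (L (α, i)) (L (-α, 0)) = 0 := by
  rcases lt_trichotomy α 0 with hα | rfl | hα
  · exact hφ.antidiag_of_neg hL hq h2 hi hα
  · exact hφ.zero_mode_right_zero hL hq h2 i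
  · have h := hφ.antidiag_of_neg hL hq h2 hi (neg_lt_zero.mpr hα)
    rwa [neg_neg, hφ.antidiag_neg hL hq h2 hα.ne', neg_eq_zero] at h

theorem antidiag_eq_zero_mode (hφ : IsTwoCocycle φ) (hL : IsBlockFamily q L) (hq : 0 < q)
    (h2 : ∀ i : ℕ, φ (L (-1, i)) (L (1, 0)) = 0) {α : ℤ} (hα : α ≠ 0) {j k : ℕ} (hjk : 0 < j + k) :
    (((k : ℤ) + q : ℤ) : ℂ) * φ (L (α, k)) (L (-α, j))
      = (((j : ℤ) + 2 * q : ℤ) : ℂ) * φ (L (0, j)) (L (0, k)) := by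
  have hc := hφ.cyclic_block hL α (-α) 0 0 j k
  simp only [add_zero, zero_add, add_neg_cancel] at hc
  have h0 := hφ.antidiag_zero_right hL hq h2 hjk (-α)
  rw [neg_neg] at h0
  rw [h0] at hc
  refine sub_eq_zero.mp (eq_zero_of_intCast_mul_eq_zero hα ?_)
  linear_combination (norm := (push_cast; ring1)) hc

theorem zero_mode_eq_zero (hφ : IsTwoCocycle φ) (hL : IsBlockFamily q L) (hq : 0 < q)
    (h2 : ∀ i : ℕ, φ (L (-1, i)) (L (1, 0)) = 0) {i j : ℕ} (hij : 0 < i + j) :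
    φ (L (0, j)) (L (0, i)) = 0 := by
  have hc := hφ.cyclic_block hL 2 (-1) (-1) i j 0
  norm_num only [add_zero, zero_add] at hc
  rw [hφ.antidiag_zero_right hL hq h2 hij 1, hφ.1 (L (-2, j))] at hc
  have hα1 := hφ.antidiag_eq_zero_mode hL hq h2 one_ne_zero (j := j) (k := i) (by omega)
  have hα2 := hφ.antidiag_eq_zero_mode hL hq h2 two_ne_zero (j := j) (k := i) (by omega)
  refine eq_zero_of_intCast_mul_eq_zero (c := (j + i + 3 * q) * (j + 2 * q))
    (mul_ne_zero (by omega) (by omega)) ?_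
  linear_combination (norm := (push_cast; ring1))
    ((i : ℂ) + q) * hc - (j : ℂ) * hα2 - ((i : ℂ) + 3 * q) * hα1

theorem antidiag_eq_zero_of_ne (hφ : IsTwoCocycle φ) (hL : IsBlockFamily q L) (hq : 0 < q)
    (h2 : ∀ i : ℕ, φ (L (-1, i)) (L (1, 0)) = 0) (α : ℤ) {i j : ℕ} (hij : i ≠ j) :
    φ (L (α, i)) (L (-α, j)) = 0 := by
  rcases eq_or_ne α 0 with rfl | hα
  · rw [neg_zero]
    exact hφ.zero_mode_eq_zero hL hq h2 (by omega)
  · have h := hφ.antidiag_eq_zero_mode hL hq h2 hα (j := j) (k := i) (by omega)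
    rw [hφ.zero_mode_eq_zero hL hq h2 (by omega), mul_zero] at h
    exact eq_zero_of_intCast_mul_eq_zero (by omega) h

end IsTwoCocycle

/-- Let `φ` be a 2-cocycle on the Block type Lie algebra `B(q)` with
`φ(L_{α,i}, L_{0,0}) = 0` for all `α ≠ 0` and `φ(L_{−1,i}, L_{1,0}) = 0` for all
`i`.  Then (1) `φ(L_{α,i}, L_{β,j}) = 0` whenever `α + β ≠ 0`, and
(2) `φ(L_{α,i}, L_{−α,j}) = 0` whenever `i ≠ j`. -/
theorem block_cocycle_support (q : ℕ) (hq : 0 < q)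
    (L : Module.Basis (ℤ × ℕ) ℂ B)
    (hL : ∀ (α β : ℤ) (i j : ℕ),
      ⁅L (α, i), L (β, j)⁆ =
        (((β * ((i : ℤ) + q) - α * ((j : ℤ) + q)) : ℤ) : ℂ) • L (α + β, i + j))
    (φ : B →ₗ[ℂ] B →ₗ[ℂ] ℂ) (hφ : IsTwoCocycle φ)
    (h1 : ∀ (α : ℤ) (i : ℕ), α ≠ 0 → φ (L (α, i)) (L (0, 0)) = 0)
    (h2 : ∀ i : ℕ, φ (L (-1, i)) (L (1, 0)) = 0) :
    (∀ (α β : ℤ) (i j : ℕ), α + β ≠ 0 → φ (L (α, i)) (L (β, j)) = 0) ∧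
    (∀ (α : ℤ) (i j : ℕ), i ≠ j → φ (L (α, i)) (L (-α, j)) = 0) :=
  ⟨fun _ _ i j hαβ => hφ.apply_eq_zero_of_add_ne_zero hL hq h1 i j hαβ,
    fun α _ _ hij => hφ.antidiag_eq_zero_of_ne hL hq h2 α hij⟩
end
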